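/- arXiv:1307.0092 — 6 statements merged into one kernel-verified Lean document; each statement's English description precedes it below -/
import Mathlib

section
/- The formal fractions form a non-symmetric set-operad. Precisely, for all F ∈ FF(m), G ∈ FF(n), H ∈ FF(p): (i) (nested axiom) for 1 ≤ i ≤ m and 1 ≤ j ≤ n, (F ∘_i G) ∘_{i+j−1} H = F ∘_i (G ∘_j H); (ii) (parallel axiom) for 1 ≤ i < j ≤ m, (F ∘_i G) ∘_{j+n−1} H = (F ∘_j H) ∘_i G; (iii) the fraction 1/[1] ∈ FF(1) is a two-sided unit: (1/[1]) ∘_1 G = G for every G ∈ FF(n), and F ∘_i (1/[1]) = F for every F ∈ FF(m) and 1 ≤ i ≤ m. -/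
open scoped Classical

/-- A *formal fraction*: a finitely supported exponent function on formal symbols `[S]`,
where `S` is a finset of positive integers.  The fraction `∏_S [S]^(e_S)` is encoded by
the function `S ↦ e_S`; multiplication of fractions is addition of exponent functions. -/
abbrev FFrac : Type := Finset ℕ →₀ ℤ

/-- `F` is a formal fraction of arity `n`: all its symbols are nonempty subsets of `{1,…,n}`. -/
def MemFF (n : ℕ) (F : FFrac) : Prop :=
  ∀ S ∈ F.support, S.Nonempty ∧ S ⊆ Finset.Icc 1 n

/-- Symbol relabelling for the left factor of `∘ᵢ` with an arity-`n` fraction: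
indices `j < i` are fixed, `i` is replaced by the whole block `{i,…,i+n-1}`, and
`j > i` is replaced by `j + n - 1`. -/
def subSym (i n : ℕ) (T : Finset ℕ) : Finset ℕ :=
  T.biUnion fun j =>
    if j < i then {j} else if j = i then Finset.Icc i (i + n - 1) else {j + n - 1}

/-- Symbol relabelling for the right factor of `∘ᵢ`: `j ↦ i + j - 1`. -/
def shiftSym (i : ℕ) (T : Finset ℕ) : Finset ℕ := T.image fun j => i + j - 1

/-- Composition of formal fractions: `F ∘ᵢ G = [S_{i,n}] ⬝ F̂ ⬝ Ĝ`, where `n` is the arity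
of `G`.  (`Finsupp.mapDomain` adds the exponents of symbols which become equal.) -/
noncomputable def ffCompose (n i : ℕ) (F G : FFrac) : FFrac :=
  Finsupp.single (Finset.Icc i (i + n - 1)) 1
    + Finsupp.mapDomain (subSym i n) F
    + Finsupp.mapDomain (shiftSym i) G

/-- The formal fraction `1/[1] ∈ FF(1)`. -/
noncomputable def ffUnit : FFrac := Finsupp.single {1} (-1)

lemma mem_subSym {k p : ℕ} (hk : 1 ≤ k) {T : Finset ℕ} {x : ℕ} :
    x ∈ subSym k p T ↔
      (x < k ∧ x ∈ T) ∨ (k ≤ x ∧ x + 1 ≤ k + p ∧ k ∈ T) ∨ (k + p ≤ x ∧ x + 1 - p ∈ T) := by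
  unfold subSym
  simp only [Finset.mem_biUnion]
  constructor
  · rintro ⟨t, ht, hx⟩
    by_cases h1 : t < k
    · simp only [if_pos h1, Finset.mem_singleton] at hx
      subst hx; exact Or.inl ⟨h1, ht⟩
    · by_cases h2 : t = k
      · subst h2
        rw [if_neg h1, if_pos rfl, Finset.mem_Icc] at hx
        exact Or.inr (Or.inl ⟨hx.1, by omega, ht⟩)
      · simp only [if_neg h1, if_neg h2, Finset.mem_singleton] at hx
        subst hx
        refine Or.inr (Or.inr ⟨by omega, ?_⟩)
        have h3 : t + p - 1 + 1 - p = t := by omega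
        rw [h3]; exact ht
  · rintro (⟨h, hx⟩ | ⟨h1, h2, hkT⟩ | ⟨h, hx⟩)
    · exact ⟨x, hx, by simp [h]⟩
    · refine ⟨k, hkT, ?_⟩
      rw [if_neg (lt_irrefl k), if_pos rfl, Finset.mem_Icc]
      omega
    · refine ⟨x + 1 - p, hx, ?_⟩
      rw [if_neg (by omega : ¬ x + 1 - p < k), if_neg (by omega : x + 1 - p ≠ k),
        Finset.mem_singleton]
      omega

lemma mem_shiftSym {i : ℕ} {T : Finset ℕ} {x : ℕ} :
    x ∈ shiftSym i T ↔ ∃ t ∈ T, x = i + t - 1 := by simp [shiftSym, eq_comm]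

def PW (Φ : Finset ℕ → Finset ℕ) : Prop := ∀ T, Φ T = T.biUnion fun t => Φ {t}

lemma pw_subSym (i n : ℕ) : PW (subSym i n) := by
  intro T; simp [subSym, Finset.singleton_biUnion]

lemma pw_shiftSym (i : ℕ) : PW (shiftSym i) := by
  intro T; ext x; simp [shiftSym, eq_comm]

lemma pw_id : PW id := by intro T; simp

lemma pw_comp {Φ Ψ : Finset ℕ → Finset ℕ} (hΦ : PW Φ) (hΨ : PW Ψ) : PW (Φ ∘ Ψ) := by
  intro T
  show Φ (Ψ T) = T.biUnion fun t => Φ (Ψ {t})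
  rw [hΨ T, hΦ, Finset.biUnion_biUnion]
  exact Finset.biUnion_congr rfl fun t _ => (hΦ _).symm

lemma pw_ext {Φ Ψ : Finset ℕ → Finset ℕ} (hΦ : PW Φ) (hΨ : PW Ψ)
    (h : ∀ t, Φ {t} = Ψ {t}) : Φ = Ψ :=
  funext fun T => by rw [hΦ, hΨ]; exact Finset.biUnion_congr rfl fun t _ => h t

lemma map_eq_on {Φ Ψ : Finset ℕ → Finset ℕ} (hΦ : PW Φ) (hΨ : PW Ψ) {S : Finset ℕ}
    (h : ∀ t ∈ S, Φ {t} = Ψ {t}) : Φ S = Ψ S := by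
  rw [hΦ, hΨ]; exact Finset.biUnion_congr rfl h

lemma subSym_singleton (i n t : ℕ) :
    subSym i n {t} = if t < i then {t} else if t = i then Finset.Icc i (i + n - 1)
      else {t + n - 1} := by
  simp [subSym]

lemma shiftSym_singleton (i t : ℕ) : shiftSym i {t} = {i + t - 1} := by simp [shiftSym, eq_comm]

lemma subSym_Icc_low {k p a b : ℕ} (hk : 1 ≤ k) (hb : b < k) :
    subSym k p (Finset.Icc a b) = Finset.Icc a b := by
  ext x; rw [mem_subSym hk]; simp only [Finset.mem_Icc]; omega

lemma subSym_Icc_mid {k p a b : ℕ} (hk : 1 ≤ k) (ha : a ≤ k) (hb : k ≤ b) :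
    subSym k p (Finset.Icc a b) = Finset.Icc a (b + p - 1) := by
  ext x; rw [mem_subSym hk]; simp only [Finset.mem_Icc]; omega

lemma subSym_Icc_high {k p a b : ℕ} (hk : 1 ≤ k) (ha : k < a) :
    subSym k p (Finset.Icc a b) = Finset.Icc (a + p - 1) (b + p - 1) := by
  ext x; rw [mem_subSym hk]; simp only [Finset.mem_Icc]; omega

lemma shiftSym_Icc {i a b : ℕ} (hi : 1 ≤ i) (ha : 1 ≤ a) :
    shiftSym i (Finset.Icc a b) = Finset.Icc (i + a - 1) (i + b - 1) := by
  ext x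
  rw [mem_shiftSym]
  simp only [Finset.mem_Icc]
  constructor
  · rintro ⟨t, ⟨h1, h2⟩, rfl⟩; omega
  · intro ⟨h1, h2⟩; exact ⟨x + 1 - i, ⟨by omega, by omega⟩, by omega⟩

lemma nested_F {i j n p : ℕ} (hi : 1 ≤ i) (hj : 1 ≤ j) (hjn : j ≤ n) :
    subSym (i + j - 1) p ∘ subSym i n = subSym i (n + p - 1) := by
  apply pw_ext (pw_comp (pw_subSym _ _) (pw_subSym _ _)) (pw_subSym _ _)
  intro t
  show subSym (i + j - 1) p (subSym i n {t}) = subSym i (n + p - 1) {t}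
  rw [subSym_singleton i n t, subSym_singleton i (n + p - 1) t]
  by_cases h1 : t < i
  · rw [if_pos h1, if_pos h1, subSym_singleton, if_pos (by omega : t < i + j - 1)]
  · by_cases h2 : t = i
    · rw [if_neg h1, if_neg h1, if_pos h2, if_pos h2,
        subSym_Icc_mid (by omega) (by omega) (by omega)]
      congr 1
      omega
    · rw [if_neg h1, if_neg h1, if_neg h2, if_neg h2, subSym_singleton,
        if_neg (by omega : ¬ t + n - 1 < i + j - 1), if_neg (by omega : ¬ t + n - 1 = i + j - 1)]
      congr 1
      omega

lemma nested_G {i j p : ℕ} (hi : 1 ≤ i) (hj : 1 ≤ j) :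
    subSym (i + j - 1) p ∘ shiftSym i = shiftSym i ∘ subSym j p := by
  apply pw_ext (pw_comp (pw_subSym _ _) (pw_shiftSym _))
    (pw_comp (pw_shiftSym _) (pw_subSym _ _))
  intro t
  show subSym (i + j - 1) p (shiftSym i {t}) = shiftSym i (subSym j p {t})
  rw [shiftSym_singleton, subSym_singleton, subSym_singleton]
  by_cases h1 : t < j
  · rw [if_pos h1, if_pos (by omega : i + t - 1 < i + j - 1), shiftSym_singleton]
  · by_cases h2 : t = j
    · subst h2
      rw [if_neg h1, if_pos rfl, if_neg (by omega : ¬ i + t - 1 < i + t - 1), if_pos rfl,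
        shiftSym_Icc hi (by omega)]
      congr 1
      omega
    · rw [if_neg h1, if_neg h2, if_neg (by omega : ¬ i + t - 1 < i + j - 1),
        if_neg (by omega : ¬ i + t - 1 = i + j - 1), shiftSym_singleton]
      congr 1
      omega

lemma nested_H {i j : ℕ} (hi : 1 ≤ i) (hj : 1 ≤ j) :
    shiftSym i ∘ shiftSym j = shiftSym (i + j - 1) := by
  apply pw_ext (pw_comp (pw_shiftSym _) (pw_shiftSym _)) (pw_shiftSym _)
  intro t
  show shiftSym i (shiftSym j {t}) = shiftSym (i + j - 1) {t}
  rw [shiftSym_singleton, shiftSym_singleton, shiftSym_singleton]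
  congr 1
  omega

lemma par_F {i j n p : ℕ} (hi : 1 ≤ i) (hij : i < j) :
    subSym (j + n - 1) p ∘ subSym i n = subSym i n ∘ subSym j p := by
  apply pw_ext (pw_comp (pw_subSym _ _) (pw_subSym _ _))
    (pw_comp (pw_subSym _ _) (pw_subSym _ _))
  intro t
  show subSym (j + n - 1) p (subSym i n {t}) = subSym i n (subSym j p {t})
  rw [subSym_singleton i n t, subSym_singleton j p t]
  by_cases h1 : t < i
  · rw [if_pos h1, if_pos (by omega : t < j), subSym_singleton,
      if_pos (by omega : t < j + n - 1), subSym_singleton, if_pos h1]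
  · by_cases h2 : t = i
    · rw [if_neg h1, if_pos h2, if_pos (by omega : t < j),
        subSym_Icc_low (by omega) (by omega), subSym_singleton, if_neg h1, if_pos h2]
    · by_cases h3 : t < j
      · rw [if_neg h1, if_neg h2, if_pos h3, subSym_singleton,
          if_pos (by omega : t + n - 1 < j + n - 1),
          subSym_singleton, if_neg h1, if_neg h2]
      · by_cases h4 : t = j
        · rw [if_neg h1, if_neg h2, if_neg h3, if_pos h4, subSym_singleton,
            if_neg (by omega : ¬ t + n - 1 < j + n - 1), if_pos (by omega : t + n - 1 = j + n - 1),
            subSym_Icc_high hi (by omega)]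
          congr 1
          omega
        · rw [if_neg h1, if_neg h2, if_neg h3, if_neg h4, subSym_singleton,
            if_neg (by omega : ¬ t + n - 1 < j + n - 1),
            if_neg (by omega : ¬ t + n - 1 = j + n - 1),
            subSym_singleton, if_neg (by omega : ¬ t + p - 1 < i),
            if_neg (by omega : ¬ t + p - 1 = i)]
          congr 1
          omega

/-- The formal fractions form a non-symmetric set-operad: the nested and
parallel associativity axioms hold, and `1/[1]` is a two-sided unit. -/
theorem ffrac_is_operad :
    (∀ (m n p : ℕ) (F G H : FFrac), MemFF m F → MemFF n G → MemFF p H →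
      ∀ i j : ℕ, 1 ≤ i → i ≤ m → 1 ≤ j → j ≤ n →
        ffCompose p (i + j - 1) (ffCompose n i F G) H
          = ffCompose (n + p - 1) i F (ffCompose p j G H)) ∧
    (∀ (m n p : ℕ) (F G H : FFrac), MemFF m F → MemFF n G → MemFF p H →
      ∀ i j : ℕ, 1 ≤ i → i < j → j ≤ m →
        ffCompose p (j + n - 1) (ffCompose n i F G) H
          = ffCompose n i (ffCompose p j F H) G) ∧
    (∀ (n : ℕ) (G : FFrac), MemFF n G → ffCompose n 1 ffUnit G = G) ∧
    (∀ (m : ℕ) (F : FFrac), MemFF m F → ∀ i : ℕ, 1 ≤ i → i ≤ m →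
        ffCompose 1 i F ffUnit = F) := by
  refine ⟨?_, ?_, ?_, ?_⟩
  · intro m n p F G H hF hG hH i j hi him hj hjn
    unfold ffCompose
    rw [Finsupp.mapDomain_add, Finsupp.mapDomain_add, Finsupp.mapDomain_add, Finsupp.mapDomain_add,
      Finsupp.mapDomain_single, Finsupp.mapDomain_single,
      ← Finsupp.mapDomain_comp, ← Finsupp.mapDomain_comp, ← Finsupp.mapDomain_comp,
      ← Finsupp.mapDomain_comp]
    rw [nested_F hi hj hjn, nested_G hi hj, nested_H hi hj,
      subSym_Icc_mid (by omega) (by omega) (by omega), shiftSym_Icc hi hj]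
    rw [show i + (n + p - 1) - 1 = i + n - 1 + p - 1 by omega,
      show i + (j + p - 1) - 1 = i + j - 1 + p - 1 by omega]
    abel
  · intro m n p F G H hF hG hH i j hi hij hjm
    have hGc : ∀ S ∈ G.support, (subSym (j + n - 1) p ∘ shiftSym i) S = shiftSym i S := by
      intro S hS
      refine map_eq_on (pw_comp (pw_subSym _ _) (pw_shiftSym _)) (pw_shiftSym _) fun t ht => ?_
      have htn := Finset.mem_Icc.mp ((hG S hS).2 ht)
      show subSym (j + n - 1) p (shiftSym i {t}) = shiftSym i {t}
      rw [shiftSym_singleton, subSym_singleton, if_pos (by omega : i + t - 1 < j + n - 1)]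
    have hHc : ∀ S ∈ H.support, shiftSym (j + n - 1) S = (subSym i n ∘ shiftSym j) S := by
      intro S hS
      refine map_eq_on (pw_shiftSym _) (pw_comp (pw_subSym _ _) (pw_shiftSym _)) fun t ht => ?_
      have htp := Finset.mem_Icc.mp ((hH S hS).2 ht)
      show shiftSym (j + n - 1) {t} = subSym i n (shiftSym j {t})
      rw [shiftSym_singleton, shiftSym_singleton, subSym_singleton,
        if_neg (by omega : ¬ j + t - 1 < i), if_neg (by omega : ¬ j + t - 1 = i)]
      congr 1
      omega
    unfold ffCompose
    rw [Finsupp.mapDomain_add, Finsupp.mapDomain_add, Finsupp.mapDomain_add, Finsupp.mapDomain_add,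
      Finsupp.mapDomain_single, Finsupp.mapDomain_single,
      ← Finsupp.mapDomain_comp, ← Finsupp.mapDomain_comp, ← Finsupp.mapDomain_comp,
      ← Finsupp.mapDomain_comp]
    rw [par_F hi hij, Finsupp.mapDomain_congr hGc, Finsupp.mapDomain_congr hHc,
      subSym_Icc_low (by omega) (by omega), subSym_Icc_high hi hij]
    rw [show j + p - 1 + n - 1 = j + n - 1 + p - 1 by omega]
    abel
  · intro n G hG
    have hsh : Finsupp.mapDomain (shiftSym 1) G = G := by
      rw [Finsupp.mapDomain_congr (g := id), Finsupp.mapDomain_id]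
      intro S hS
      refine map_eq_on (pw_shiftSym 1) pw_id fun t ht => ?_
      have htn := Finset.mem_Icc.mp ((hG S hS).2 ht)
      rw [shiftSym_singleton]
      show ({1 + t - 1} : Finset ℕ) = {t}
      congr 1
      omega
    unfold ffCompose ffUnit
    rw [Finsupp.mapDomain_single, subSym_singleton, if_neg (lt_irrefl 1), if_pos rfl, hsh]
    have h0 : Finsupp.single (Finset.Icc 1 (1 + n - 1)) (1 : ℤ)
        + Finsupp.single (Finset.Icc 1 (1 + n - 1)) (-1 : ℤ) = 0 := by
      rw [← Finsupp.single_add]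
      norm_num
    rw [h0, zero_add]
  · intro m F hF i hi him
    have hsub : Finsupp.mapDomain (subSym i 1) F = F := by
      have : subSym i 1 = id := by
        refine pw_ext (pw_subSym _ _) pw_id fun t => ?_
        rw [subSym_singleton]
        show _ = ({t} : Finset ℕ)
        by_cases h1 : t < i
        · rw [if_pos h1]
        · by_cases h2 : t = i
          · subst h2
            rw [if_neg h1, if_pos rfl, Nat.add_sub_cancel, Finset.Icc_self]
          · rw [if_neg h1, if_neg h2]
            congr 1
      rw [this, Finsupp.mapDomain_id]
    unfold ffCompose ffUnit
    rw [Finsupp.mapDomain_single, shiftSym_singleton, hsub,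
      show i + 1 - 1 = i by omega, Finset.Icc_self]
    have h0 : Finsupp.single ({i} : Finset ℕ) (1 : ℤ)
        + Finsupp.single ({i} : Finset ℕ) (-1 : ℤ) = 0 := by
      rw [← Finsupp.single_add]
      norm_num
    rw [add_right_comm, h0, zero_add]
end

section
/- In the operad of formal fractions the following eight quadratic identities hold among the four generators: F_≺ ∘₁ F_≻ = F_≻ ∘₂ F_≺ = 1/([123][1][3]); F_∘ ∘₁ F_∘ = F_∘ ∘₂ F_∘ = 1/[123]; F_∘ ∘₁ F_≻ = F_≻ ∘₂ F_∘ = 1/([123][1]); F_∘ ∘₁ F_≺ = F_∘ ∘₂ F_≻ = 1/([123][2]); F_≺ ∘₁ F_∘ = F_∘ ∘₂ F_≺ = 1/([123][3]); F_⊙ ∘₁ F_⊙ = F_⊙ ∘₂ F_⊙ = 1/([1][2][3]); F_≺ ∘₁ F_≺ = F_≺ ∘₂ F_⊙ = 1/([123][2][3]); F_≻ ∘₁ F_⊙ = F_≻ ∘₂ F_≻ = 1/([123][1][2]). -/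
open scoped Classical

/-- `F_≻ = 1/([1][12])`. -/
noncomputable def Fsucc : FFrac := Finsupp.single {1} (-1) + Finsupp.single {1, 2} (-1)
/-- `F_≺ = 1/([2][12])`. -/
noncomputable def Fprec : FFrac := Finsupp.single {2} (-1) + Finsupp.single {1, 2} (-1)
/-- `F_∘ = 1/[12]`. -/
noncomputable def Fmid : FFrac := Finsupp.single {1, 2} (-1)
/-- `F_⊙ = 1/([1][2])`. -/
noncomputable def Fdot : FFrac := Finsupp.single {1} (-1) + Finsupp.single {2} (-1)

lemma sub11 : subSym 1 2 ({1} : Finset ℕ) = {1,2} := by decide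
lemma sub112 : subSym 1 2 ({1,2} : Finset ℕ) = {1,2,3} := by decide
lemma sub12 : subSym 1 2 ({2} : Finset ℕ) = {3} := by decide
lemma sub21 : subSym 2 2 ({1} : Finset ℕ) = {1} := by decide
lemma sub212 : subSym 2 2 ({1,2} : Finset ℕ) = {1,2,3} := by decide
lemma sub22 : subSym 2 2 ({2} : Finset ℕ) = {2,3} := by decide
lemma sh11 : shiftSym 1 ({1} : Finset ℕ) = {1} := by decide
lemma sh112 : shiftSym 1 ({1,2} : Finset ℕ) = {1,2} := by decide
lemma sh12 : shiftSym 1 ({2} : Finset ℕ) = {2} := by decide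
lemma sh21 : shiftSym 2 ({1} : Finset ℕ) = {2} := by decide
lemma sh212 : shiftSym 2 ({1,2} : Finset ℕ) = {2,3} := by decide
lemma sh22 : shiftSym 2 ({2} : Finset ℕ) = {3} := by decide
lemma icc12 : Finset.Icc 1 (1+2-1) = ({1,2} : Finset ℕ) := by decide
lemma icc23 : Finset.Icc 2 (2+2-1) = ({2,3} : Finset ℕ) := by decide

lemma neg1 (a : Finset ℕ) : (Finsupp.single a (-1) : FFrac) = - Finsupp.single a 1 := by
  simp [Finsupp.single_neg]

/-- The eight quadratic relations satisfied by the four generating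
formal fractions. -/
theorem ff4_relations :
    (ffCompose 2 1 Fprec Fsucc
        = Finsupp.single {1, 2, 3} (-1) + Finsupp.single {1} (-1)
            + Finsupp.single {3} (-1) ∧
      ffCompose 2 2 Fsucc Fprec
        = Finsupp.single {1, 2, 3} (-1) + Finsupp.single {1} (-1)
            + Finsupp.single {3} (-1)) ∧
    (ffCompose 2 1 Fmid Fmid = Finsupp.single {1, 2, 3} (-1) ∧
      ffCompose 2 2 Fmid Fmid = Finsupp.single {1, 2, 3} (-1)) ∧
    (ffCompose 2 1 Fmid Fsucc
        = Finsupp.single {1, 2, 3} (-1) + Finsupp.single {1} (-1) ∧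
      ffCompose 2 2 Fsucc Fmid
        = Finsupp.single {1, 2, 3} (-1) + Finsupp.single {1} (-1)) ∧
    (ffCompose 2 1 Fmid Fprec
        = Finsupp.single {1, 2, 3} (-1) + Finsupp.single {2} (-1) ∧
      ffCompose 2 2 Fmid Fsucc
        = Finsupp.single {1, 2, 3} (-1) + Finsupp.single {2} (-1)) ∧
    (ffCompose 2 1 Fprec Fmid
        = Finsupp.single {1, 2, 3} (-1) + Finsupp.single {3} (-1) ∧
      ffCompose 2 2 Fmid Fprec
        = Finsupp.single {1, 2, 3} (-1) + Finsupp.single {3} (-1)) ∧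
    (ffCompose 2 1 Fdot Fdot
        = Finsupp.single {1} (-1) + Finsupp.single {2} (-1) + Finsupp.single {3} (-1) ∧
      ffCompose 2 2 Fdot Fdot
        = Finsupp.single {1} (-1) + Finsupp.single {2} (-1) + Finsupp.single {3} (-1)) ∧
    (ffCompose 2 1 Fprec Fprec
        = Finsupp.single {1, 2, 3} (-1) + Finsupp.single {2} (-1)
            + Finsupp.single {3} (-1) ∧
      ffCompose 2 2 Fprec Fdot
        = Finsupp.single {1, 2, 3} (-1) + Finsupp.single {2} (-1)
            + Finsupp.single {3} (-1)) ∧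
    (ffCompose 2 1 Fsucc Fdot
        = Finsupp.single {1, 2, 3} (-1) + Finsupp.single {1} (-1)
            + Finsupp.single {2} (-1) ∧
      ffCompose 2 2 Fsucc Fsucc
        = Finsupp.single {1, 2, 3} (-1) + Finsupp.single {1} (-1)
            + Finsupp.single {2} (-1)) := by
  refine ⟨⟨?_, ?_⟩, ⟨?_, ?_⟩, ⟨?_, ?_⟩, ⟨?_, ?_⟩, ⟨?_, ?_⟩, ⟨?_, ?_⟩, ⟨?_, ?_⟩, ⟨?_, ?_⟩⟩ <;>
  simp only [ffCompose, Fprec, Fsucc, Fmid, Fdot, Finsupp.mapDomain_add,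
    Finsupp.mapDomain_single, sub11, sub112, sub12, sub21, sub212, sub22,
    sh11, sh112, sh12, sh21, sh212, sh22, icc12, icc23] <;>
  simp only [neg1] <;> abel
end

section
/- Let c_n be the number of canonical trees in G₄ with n internal nodes (with c₀ = 1, counting the trivial tree consisting of a single leaf). Then for all n ≥ 1, c_n = 2·c_{n−1} + 2·∑_{i=0}^{n−1} c_i · c_{n−1−i}; equivalently the ordinary generating series F = ∑_{n≥0} c_n x^n ∈ ℚ[[x]] satisfies 2x·F² + (2x−1)·F + 1 = 0. In particular c₁ = 4, c₂ = 24, c₃ = 176. -/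
open scoped Classical

/-- The four binary generators `≺, ≻, ∘, ⊙`. -/
inductive Lbl : Type
  | prec | succ | mid | dot

/-- Planar binary trees with internal nodes labelled by `{≺, ≻, ∘, ⊙}`: the underlying
objects of the free non-symmetric operad `G₄` on four binary generators (a tree with `n`
leaves is an element of `G₄(n)`). -/
inductive T4 : Type
  | leaf : T4
  | node : Lbl → T4 → T4 → T4

/-- The generator `a` as a two-leaf tree. -/
def gen2 (a : Lbl) : T4 := T4.node a T4.leaf T4.leaf
/-- `a ∘₁ b` for generators `a, b`. -/
def cmp1 (a b : Lbl) : T4 := T4.node a (gen2 b) T4.leaf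
/-- `a ∘₂ b` for generators `a, b`. -/
def cmp2 (a b : Lbl) : T4 := T4.node a T4.leaf (gen2 b)

/-- The eight defining relations. -/
inductive Rel8 : T4 → T4 → Prop
  | r1 : Rel8 (cmp1 .prec .succ) (cmp2 .succ .prec)
  | r2 : Rel8 (cmp1 .mid .mid) (cmp2 .mid .mid)
  | r3 : Rel8 (cmp1 .mid .succ) (cmp2 .succ .mid)
  | r4 : Rel8 (cmp1 .mid .prec) (cmp2 .mid .succ)
  | r5 : Rel8 (cmp1 .prec .mid) (cmp2 .mid .prec)
  | r6 : Rel8 (cmp1 .dot .dot) (cmp2 .dot .dot)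
  | r7 : Rel8 (cmp1 .prec .prec) (cmp2 .prec .dot)
  | r8 : Rel8 (cmp1 .succ .dot) (cmp2 .succ .succ)

/-- The smallest equivalence relation containing the eight relations and compatible with
grafting at any position (equivalently, the congruence generated under node contexts). -/
inductive TEquiv : T4 → T4 → Prop
  | base {s t : T4} : Rel8 s t → TEquiv s t
  | refl (t : T4) : TEquiv t t
  | symm {s t : T4} : TEquiv s t → TEquiv t s
  | trans {s t u : T4} : TEquiv s t → TEquiv t u → TEquiv s u
  | congrL {l : Lbl} {a a' b : T4} : TEquiv a a' → TEquiv (T4.node l a b) (T4.node l a' b)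
  | congrR {l : Lbl} {a b b' : T4} : TEquiv b b' → TEquiv (T4.node l a b) (T4.node l a b')

/-- The eight (root label, right-child label) pairs appearing on the right-hand sides of
the relations. -/
def RHSPair : Lbl → Lbl → Prop := fun a b =>
  (a = .succ ∧ b = .prec) ∨ (a = .mid ∧ b = .mid) ∨ (a = .succ ∧ b = .mid) ∨
  (a = .mid ∧ b = .succ) ∨ (a = .mid ∧ b = .prec) ∨ (a = .dot ∧ b = .dot) ∨
  (a = .prec ∧ b = .dot) ∨ (a = .succ ∧ b = .succ)

/-- A tree is canonical if no internal node together with its right child realizes one of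
the eight right-hand side patterns. -/
def Canonical : T4 → Prop
  | .leaf => True
  | .node a l r =>
      Canonical l ∧ Canonical r ∧
      match r with
      | .leaf => True
      | .node b _ _ => ¬ RHSPair a b

/-- Number of internal nodes of a tree. -/
def numNodes : T4 → ℕ
  | .leaf => 0
  | .node _ a b => numNodes a + numNodes b + 1

/-- `canonCount n` is the number of canonical trees with `n` internal nodes. -/
noncomputable def canonCount (n : ℕ) : ℕ :=
  Set.ncard {t : T4 | Canonical t ∧ numNodes t = n}

/-!
A canonical tree is a leaf or a node `(a, l, r)` with `l`, `r` canonical and `(a, b)` not one of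
the eight forbidden pairs when `r` has root label `b`. Each label `b` occurs as the second entry of
exactly two forbidden pairs, so a canonical right subtree with at least one node can be grafted
under exactly two root labels, while a leaf can be grafted under all four. Splitting by the sizes
`i + j = n` of the two subtrees gives `c (n + 1) = ∑ c i * (2 * c j + 2 * [j = 0])`, i.e.
`c (n + 1) = 2 c n + 2 ∑_{i + j = n} c i c j`, which is the coefficientwise form of
`2 X F² + (2 X - 1) F + 1 = 0`.
-/

open Finset

theorem PowerSeries.quadratic_eq_zero_of_recurrence {R : Type*} [CommRing R] {c : ℕ → R}
    (h0 : c 0 = 1)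
    (hsucc : ∀ n, c (n + 1) = 2 * c n + 2 * ∑ p ∈ antidiagonal n, c p.1 * c p.2) :
    2 * X * mk c ^ 2 + (2 * X - 1) * mk c + 1 = 0 := by
  have hF : 2 * X * mk c ^ 2 + (2 * X - 1) * mk c + 1 =
      X * (C 2 * (mk c * mk c + mk c)) - mk c + 1 := by
    rw [map_ofNat]
    ring
  ext (_ | n)
  · simp [h0]
  · rw [hF, map_add, map_sub, coeff_succ_X_mul, coeff_C_mul, map_add, coeff_mul]
    simp only [coeff_mk, coeff_one, hsucc, map_zero, Nat.succ_ne_zero, if_false]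
    ring

deriving instance DecidableEq for Lbl

instance : Fintype Lbl := ⟨{.prec, .succ, .mid, .dot}, fun a => by cases a <;> decide⟩

instance (a b : Lbl) : Decidable (RHSPair a b) := by
  unfold RHSPair
  infer_instance

def RightCompatible (a : Lbl) : T4 → Prop
  | .leaf => True
  | .node b _ _ => ¬ RHSPair a b

instance (a : Lbl) : DecidablePred (RightCompatible a)
  | .leaf => inferInstanceAs (Decidable True)
  | .node b _ _ => inferInstanceAs (Decidable ¬ RHSPair a b)

theorem canonical_node_iff {a : Lbl} {l r : T4} :
    Canonical (.node a l r) ↔ Canonical l ∧ Canonical r ∧ RightCompatible a r := by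
  cases r <;> rfl

theorem card_rightCompatible_leaf : #{a | RightCompatible a .leaf} = 4 := by
  decide

theorem card_rightCompatible_node (b : Lbl) (l r : T4) :
    #{a | RightCompatible a (.node b l r)} = 2 := by
  show #{a | ¬ RHSPair a b} = 2
  cases b <;> decide

noncomputable def canonicalTrees : ℕ → Finset T4
  | 0 => {.leaf}
  | n + 1 => (antidiagonal n).attach.biUnion fun p =>
      (canonicalTrees p.1.1 ×ˢ
          {x ∈ (univ : Finset Lbl) ×ˢ canonicalTrees p.1.2 | RightCompatible x.1 x.2}).image
        fun x => T4.node x.2.1 x.1 x.2.2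
decreasing_by
  all_goals have := mem_antidiagonal.mp p.2; omega

noncomputable def compatiblePairs (m : ℕ) : Finset (Lbl × T4) :=
  {x ∈ univ ×ˢ canonicalTrees m | RightCompatible x.1 x.2}

theorem canonicalTrees_succ (n : ℕ) :
    canonicalTrees (n + 1) = (antidiagonal n).biUnion fun p =>
      (canonicalTrees p.1 ×ˢ compatiblePairs p.2).image fun x => T4.node x.2.1 x.1 x.2.2 := by
  rw [canonicalTrees]
  exact attach_biUnion (f := fun p : ℕ × ℕ =>
    (canonicalTrees p.1 ×ˢ compatiblePairs p.2).image fun x => T4.node x.2.1 x.1 x.2.2)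

theorem mem_canonicalTrees {t : T4} {n : ℕ} :
    t ∈ canonicalTrees n ↔ Canonical t ∧ numNodes t = n := by
  induction t generalizing n with
  | leaf => cases n <;> simp [canonicalTrees, Canonical, numNodes]
  | node a l r ihl ihr =>
    cases n with
    | zero => simp [canonicalTrees, numNodes]
    | succ n =>
      simp only [canonicalTrees_succ, compatiblePairs, mem_biUnion,
        HasAntidiagonal.mem_antidiagonal, mem_image, mem_product, mem_filter, mem_univ, true_and,
        T4.node.injEq, Prod.exists, ↓existsAndEq, ihr, and_true, exists_eq_right, ihl,
        canonical_node_iff, numNodes, Nat.add_right_cancel_iff]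
      tauto

theorem canonCount_eq_card (n : ℕ) : canonCount n = #(canonicalTrees n) := by
  rw [canonCount, ← Set.ncard_coe_finset]
  congr
  ext t
  simp [mem_canonicalTrees]

theorem canonCount_zero : canonCount 0 = 1 := by
  simp [canonCount_eq_card, canonicalTrees]

theorem card_canonicalTrees_succ (n : ℕ) :
    #(canonicalTrees (n + 1)) =
      ∑ p ∈ antidiagonal n, #(canonicalTrees p.1) * #(compatiblePairs p.2) := by
  rw [canonicalTrees_succ, card_biUnion]
  · refine sum_congr rfl fun p _ => ?_
    rw [card_image_of_injective, card_product]
    rintro ⟨l, a, r⟩ ⟨l', a', r'⟩ h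
    cases h
    rfl
  · intro p hp q hq hpq
    refine disjoint_left.2 ?_
    simp only [mem_image, mem_product, not_exists, not_and]
    rintro _ ⟨⟨l, a, r⟩, ⟨hl, -⟩, rfl⟩ ⟨l', a', r'⟩ ⟨hl', -⟩ h
    cases h
    rw [mem_canonicalTrees] at hl hl'
    exact hpq ((HasAntidiagonal.antidiagonal_congr hp hq).2 (hl.2.symm.trans hl'.2))

theorem card_compatiblePairs (m : ℕ) :
    #(compatiblePairs m) = 2 * #(canonicalTrees m) + if m = 0 then 2 else 0 := by
  have hsum : #(compatiblePairs m) = ∑ r ∈ canonicalTrees m, #{a | RightCompatible a r} := by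
    rw [compatiblePairs, card_filter, sum_product_right]
    simp only [card_filter]
  rw [hsum]
  rcases m with _ | m
  · simp [canonicalTrees, card_rightCompatible_leaf]
  · calc ∑ r ∈ canonicalTrees (m + 1), #{a | RightCompatible a r}
        = ∑ r ∈ canonicalTrees (m + 1), 2 := sum_congr rfl fun r hr => ?_
      _ = _ := by simp [mul_comm]
    obtain ⟨-, hr⟩ := mem_canonicalTrees.1 hr
    cases r with
    | leaf => simp [numNodes] at hr
    | node b l r => exact card_rightCompatible_node b l r

theorem canonCount_succ (n : ℕ) :
    canonCount (n + 1) =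
      2 * canonCount n + 2 * ∑ p ∈ antidiagonal n, canonCount p.1 * canonCount p.2 := by
  have hleaf : ∑ p ∈ antidiagonal n, #(canonicalTrees p.1) * (if p.2 = 0 then 2 else 0) =
      2 * #(canonicalTrees n) := by
    rw [sum_eq_single (n, 0)]
    · simp [mul_comm]
    · rintro ⟨i, j⟩ hp hne
      rw [HasAntidiagonal.mem_antidiagonal] at hp
      have : j ≠ 0 := by rintro rfl; simp_all
      simp [this]
    · simp
  simp only [canonCount_eq_card, card_canonicalTrees_succ, card_compatiblePairs, mul_add,
    sum_add_distrib, hleaf, mul_left_comm _ 2, ← mul_sum]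
  ring

/-- The number `c_n` of canonical trees with `n` internal nodes
satisfies `c₀ = 1`, `c_n = 2 c_{n-1} + 2 ∑_{i=0}^{n-1} c_i c_{n-1-i}`; equivalently its
ordinary generating series `F` satisfies `2xF² + (2x - 1)F + 1 = 0`.  In particular
`c₁ = 4`, `c₂ = 24`, `c₃ = 176`. -/
theorem canonical_generating_series :
    canonCount 0 = 1 ∧ canonCount 1 = 4 ∧ canonCount 2 = 24 ∧ canonCount 3 = 176 ∧
    (∀ n : ℕ, 1 ≤ n →
      canonCount n = 2 * canonCount (n - 1)
        + 2 * ∑ i ∈ Finset.range n, canonCount i * canonCount (n - 1 - i)) ∧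
    (2 * PowerSeries.X * (PowerSeries.mk fun n => (canonCount n : ℚ)) ^ 2
      + (2 * PowerSeries.X - 1) * (PowerSeries.mk fun n => (canonCount n : ℚ))
      + 1 = 0) := by
  have h1 : canonCount 1 = 4 := by simp [canonCount_succ, canonCount_zero]
  have h2 : canonCount 2 = 24 := by
    simp [canonCount_succ 1, Nat.sum_antidiagonal_succ, canonCount_zero, h1]
  have h3 : canonCount 3 = 176 := by
    simp [canonCount_succ 2, Nat.sum_antidiagonal_succ, canonCount_zero, h1, h2]
  refine ⟨canonCount_zero, h1, h2, h3, fun n hn => ?_, ?_⟩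
  · obtain ⟨m, rfl⟩ := Nat.exists_eq_add_of_le' hn
    simpa [Nat.sum_antidiagonal_eq_sum_range_succ_mk] using canonCount_succ m
  · refine PowerSeries.quadratic_eq_zero_of_recurrence (by simp [canonCount_zero]) fun n => ?_
    exact_mod_cast canonCount_succ n
end

section
/- The labelled red and white trees with the compositions ∘_x form a set-operad: (i) if x and y are two distinct labels of A, then (A ∘_x B) ∘_y C = (A ∘_y C) ∘_x B (where on each side the second composition is performed at the image of the label under the relabelling conventions); (ii) if x is a label of A and t is a label of B, then (A ∘_x B) ∘_t C = A ∘_x (B ∘_t C) (again at the image of t under the relabelling); (iii) the single-node tree labelled {1} is a two-sided unit for the compositions. -/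
open scoped Classical

/- A labelled red and white tree on `{1,…,n}` is encoded by the (laminar) family of the
sets `S(z)` of all labels carried by the subtree rooted at each node `z`; this determines
the tree completely (children of a node are the maximal proper members of the family
below it, its own labels are those not appearing in its children, and the condition that
an unlabelled node has at least two children is automatic). -/

/-- The children of the node `S` in the family `fam`: maximal members strictly below `S`. -/
def childrenF (fam : Finset (Finset ℕ)) (S : Finset ℕ) : Finset (Finset ℕ) :=
  fam.filter fun T => T ⊂ S ∧ ∀ U ∈ fam, T ⊂ U → ¬ U ⊂ S

/-- The set of labels carried by the node `S` itself. -/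
def labelsOf (fam : Finset (Finset ℕ)) (S : Finset ℕ) : Finset ℕ :=
  S \ (childrenF fam S).biUnion id

/-- `fam` encodes a labelled red and white tree on `{1,…,n}` (`fam ∈ BWTSL(n)`). -/
def IsRWTree (n : ℕ) (fam : Finset (Finset ℕ)) : Prop :=
  (∀ S ∈ fam, S.Nonempty ∧ S ⊆ Finset.Icc 1 n) ∧
  Finset.Icc 1 n ∈ fam ∧
  ∀ S ∈ fam, ∀ T ∈ fam, S ⊆ T ∨ T ⊆ S ∨ Disjoint S T

/-- The tree is recursively labelled: the total label set of every subtree is an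
interval of consecutive integers. -/
def IsRecursive (fam : Finset (Finset ℕ)) : Prop :=
  ∀ S ∈ fam, ∃ a b : ℕ, S = Finset.Icc a b

/-- The node `S` is red: it carries no label and all of its children are white. -/
def IsRed (fam : Finset (Finset ℕ)) (S : Finset ℕ) : Prop :=
  labelsOf fam S = ∅ ∧ ∀ T ∈ childrenF fam S, ¬ IsRed fam T
termination_by S.card
decreasing_by
  rename_i hT
  exact Finset.card_lt_card (Finset.mem_filter.mp hT).2.1

/-- Relabelling of the first tree in `T₁ ∘ₓ T₂` (`n` the arity of `T₂`): labels `j > x`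
are shifted by `n - 1` and the label `x` becomes the whole block `{x,…,x+n-1}`. -/
def relabL (x n : ℕ) (T : Finset ℕ) : Finset ℕ :=
  T.biUnion fun j =>
    if j < x then {j} else if j = x then Finset.Icc x (x + n - 1) else {j + n - 1}

/-- Relabelling of the second tree in `T₁ ∘ₓ T₂`: labels are shifted by `x - 1`. -/
def relabR (x : ℕ) (T : Finset ℕ) : Finset ℕ := T.image fun j => x + j - 1

/-- The composition `T₁ ∘ₓ T₂` of labelled red and white trees (in the laminar-family
encoding), `n` being the arity of `T₂`.  The four cases correspond to the rules
(R1), (R3), (R2) and (W) respectively:  if the root of `T₂` is red then the result is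
`T₂` when `T₁` is the single node labelled `x` (R1); the node `z` of `T₁` containing `x`
is deleted and the children of the root of `T₂` are attached to its parent when `z` is a
leaf whose only label is `x` (R3); otherwise the root of `T₂` becomes a new child of `z`
(R2).  If the root of `T₂` is not red, it is merged with `z` (W). -/
noncomputable def rwCompose (n x : ℕ) (fam₁ fam₂ : Finset (Finset ℕ)) :
    Finset (Finset ℕ) :=
  let B : Finset ℕ := Finset.Icc x (x + n - 1)
  let f₁ := fam₁.image (relabL x n)
  let f₂ := fam₂.image (relabR x)
  if IsRed fam₂ (Finset.Icc 1 n) then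
    if fam₁ = {{x}} then f₂
    else if {x} ∈ fam₁ then (f₁ \ {B}) ∪ (f₂ \ {B})
    else f₁ ∪ f₂
  else f₁ ∪ (f₂ \ {B})

/-- The unit: the single node labelled `{1}`. -/
def unitT : Finset (Finset ℕ) := {{1}}
/-- `T_≺`: white root labelled `{1}` with a single white child labelled `{2}`. -/
def Tprec : Finset (Finset ℕ) := {{1, 2}, {2}}
/-- `T_≻`: white root labelled `{2}` with a single white child labelled `{1}`. -/
def Tsucc : Finset (Finset ℕ) := {{1, 2}, {1}}
/-- `T_∘`: a single white node labelled `{1,2}`. -/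
def Tmid : Finset (Finset ℕ) := {{1, 2}}
/-- `T_⊙`: red empty root with two white children labelled `{1}` and `{2}`. -/
def Tdot : Finset (Finset ℕ) := {{1, 2}, {1}, {2}}

/-!
In the laminar-family encoding a composite is an explicit union (`rwCompose_eq`): the images under
`relabL` of the nodes of `A` other than `{x}`, the images under `relabR` of the non-root nodes
of `B`, and possibly the block `Icc x (x + n - 1)`. Membership in `relabL x n S` is read off
through `collapse x n`, so the identities between iterated relabellings reduce to arithmetic, and
both sides of the parallel and of the nested axiom become the same five-part union.

The one non-formal input is that grafting does not change colours: a node `S ≠ {x}` of `A` has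
the same colour in `A ∘ₓ B` (`isRed_rwCompose_relabL`), by induction on `S`. If `x ∉ S` the
subtree is just relabelled. If `x` is a label of `S`, both are white: the image of `S` has the
red block as a child, or inherits a label or a red child from the white root of `B`. Otherwise
the grafted nodes below the image of `S` are never red children of it. For the nested axiom this
gives that the roots of `B ∘ₜ C` and `B` have the same colour.
-/

open Finset

/-- Both relabellings are of the form `s ↦ s.biUnion g` for such a `g`; this is what makes them
transport children, labels and colours. -/
structure IsBlockMap {α β : Type*} (g : α → Finset β) : Prop where
  nonempty : ∀ a, (g a).Nonempty
  pairwise_disjoint : Pairwise fun a b => Disjoint (g a) (g b)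

namespace IsBlockMap

variable {α β : Type*} {g : α → Finset β} {s t : Finset α}

theorem eq_of_mem_of_mem (hg : IsBlockMap g) {a b : α} {i : β} (ha : i ∈ g a) (hb : i ∈ g b) :
    a = b :=
  by_contra fun h => disjoint_left.mp (hg.pairwise_disjoint h) ha hb

variable [DecidableEq β]

theorem biUnion_subset_biUnion_iff (hg : IsBlockMap g) :
    s.biUnion g ⊆ t.biUnion g ↔ s ⊆ t := by
  refine ⟨fun h a ha => ?_, biUnion_subset_biUnion_of_subset_left g⟩
  obtain ⟨i, hi⟩ := hg.nonempty a
  obtain ⟨b, hb, hib⟩ := mem_biUnion.mp (h (mem_biUnion.mpr ⟨a, ha, hi⟩))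
  rwa [hg.eq_of_mem_of_mem hi hib]

theorem biUnion_ssubset_biUnion_iff (hg : IsBlockMap g) :
    s.biUnion g ⊂ t.biUnion g ↔ s ⊂ t := by
  simp only [ssubset_iff_subset_not_subset, hg.biUnion_subset_biUnion_iff]

theorem biUnion_injective (hg : IsBlockMap g) :
    Function.Injective fun s : Finset α => s.biUnion g := fun _ _ h =>
  (hg.biUnion_subset_biUnion_iff.mp h.le).antisymm (hg.biUnion_subset_biUnion_iff.mp h.ge)

theorem biUnion_sdiff [DecidableEq α] (hg : IsBlockMap g) :
    (s \ t).biUnion g = s.biUnion g \ t.biUnion g := by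
  ext i
  simp only [mem_biUnion, mem_sdiff, not_exists, not_and]
  constructor
  · rintro ⟨a, ⟨has, hat⟩, hi⟩
    exact ⟨⟨a, has, hi⟩, fun b hbt hib => hat (hg.eq_of_mem_of_mem hi hib ▸ hbt)⟩
  · rintro ⟨⟨a, has, hi⟩, h⟩
    exact ⟨a, ⟨has, fun hat => h a hat hi⟩, hi⟩

theorem biUnion_eq_empty_iff (hg : IsBlockMap g) : s.biUnion g = ∅ ↔ s = ∅ := by
  simpa using hg.biUnion_injective.eq_iff (b := ∅)

end IsBlockMap

theorem isBlockMap_singleton {α β : Type*} {f : α → β} (hf : Function.Injective f) :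
    IsBlockMap fun a => ({f a} : Finset β) :=
  ⟨fun _ => singleton_nonempty _, fun _ _ h => disjoint_singleton.mpr (hf.ne h)⟩

section Forest

variable {fam fam' : Finset (Finset ℕ)} {S T : Finset ℕ} {i : ℕ}

theorem mem_childrenF :
    T ∈ childrenF fam S ↔ T ∈ fam ∧ T ⊂ S ∧ ∀ U ∈ fam, T ⊂ U → ¬ U ⊂ S :=
  mem_filter

theorem mem_of_mem_childrenF (h : T ∈ childrenF fam S) : T ∈ fam := (mem_childrenF.mp h).1

theorem ssubset_of_mem_childrenF (h : T ∈ childrenF fam S) : T ⊂ S := (mem_childrenF.mp h).2.1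

theorem exists_mem_childrenF_superset (hT : T ∈ fam) (hTS : T ⊂ S) :
    ∃ c ∈ childrenF fam S, T ⊆ c := by
  have hne : (fam.filter fun U => T ⊆ U ∧ U ⊂ S).Nonempty :=
    ⟨T, mem_filter.mpr ⟨hT, le_rfl, hTS⟩⟩
  obtain ⟨c, hc, hmax⟩ := exists_max_image _ card hne
  rw [mem_filter] at hc
  refine ⟨c, mem_childrenF.mpr ⟨hc.1, hc.2.2, fun U hU hcU hUS => ?_⟩, hc.2.1⟩
  have := hmax U (mem_filter.mpr ⟨hU, hc.2.1.trans hcU.subset, hUS⟩)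
  exact this.not_gt (card_lt_card hcU)

theorem mem_labelsOf : i ∈ labelsOf fam S ↔ i ∈ S ∧ ∀ T ∈ fam, T ⊂ S → i ∉ T := by
  simp only [labelsOf, mem_sdiff, mem_biUnion, id, not_exists, not_and]
  refine and_congr_right fun _ => ⟨fun h T hT hTS hiT => ?_, fun h c hc => ?_⟩
  · obtain ⟨c, hc, hTc⟩ := exists_mem_childrenF_superset hT hTS
    exact h c hc (hTc hiT)
  · exact h c (mem_of_mem_childrenF hc) (ssubset_of_mem_childrenF hc)

theorem isRed_iff :
    IsRed fam S ↔ labelsOf fam S = ∅ ∧ ∀ T ∈ childrenF fam S, ¬ IsRed fam T := by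
  rw [IsRed]

theorem not_isRed_of_mem_labelsOf (h : i ∈ labelsOf fam S) : ¬ IsRed fam S := fun hred =>
  by simp [(isRed_iff.mp hred).1] at h

theorem not_isRed_of_isRed_child (hT : T ∈ childrenF fam S) (hred : IsRed fam T) :
    ¬ IsRed fam S := fun hS => (isRed_iff.mp hS).2 T hT hred

theorem not_isRed_singleton (a : ℕ) : ¬ IsRed fam {a} := by
  refine not_isRed_of_mem_labelsOf (i := a) (mem_labelsOf.mpr ⟨mem_singleton_self a, ?_⟩)
  intro T _ hT
  simp [ssubset_singleton_iff.mp hT]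

theorem childrenF_congr (h : ∀ T ⊆ S, T ∈ fam ↔ T ∈ fam') :
    childrenF fam S = childrenF fam' S := by
  ext T
  simp only [mem_childrenF]
  refine ⟨fun ⟨hT, hTS, hmax⟩ => ⟨(h T hTS.subset).mp hT, hTS, fun U hU hTU hUS => ?_⟩,
    fun ⟨hT, hTS, hmax⟩ => ⟨(h T hTS.subset).mpr hT, hTS, fun U hU hTU hUS => ?_⟩⟩
  · exact hmax U ((h U hUS.subset).mpr hU) hTU hUS
  · exact hmax U ((h U hUS.subset).mp hU) hTU hUS

theorem isRed_congr {fam fam' : Finset (Finset ℕ)} {S : Finset ℕ}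
    (h : ∀ T ⊆ S, T ∈ fam ↔ T ∈ fam') : IsRed fam S ↔ IsRed fam' S := by
  rw [isRed_iff, isRed_iff, labelsOf, labelsOf, childrenF_congr h]
  refine and_congr_right' (forall₂_congr fun T hT => not_congr (isRed_congr (S := T) fun U hU =>
    h U (hU.trans (ssubset_of_mem_childrenF hT).subset)))
termination_by S.card
decreasing_by exact card_lt_card (ssubset_of_mem_childrenF hT)

variable {g : ℕ → Finset ℕ}

theorem childrenF_image_biUnion (hg : IsBlockMap g) :
    childrenF (fam.image (·.biUnion g)) (S.biUnion g) =
      (childrenF fam S).image (·.biUnion g) := by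
  ext T
  simp only [mem_childrenF, mem_image, forall_exists_index, and_imp, forall_apply_eq_imp_iff₂,
    hg.biUnion_ssubset_biUnion_iff]
  constructor
  · rintro ⟨⟨U, hU, rfl⟩, hUS, hmax⟩
    refine ⟨U, ⟨hU, hg.biUnion_ssubset_biUnion_iff.mp hUS, fun V hV hUV => ?_⟩, rfl⟩
    exact hmax V hV (hg.biUnion_ssubset_biUnion_iff.mpr hUV)
  · rintro ⟨U, ⟨hU, hUS, hmax⟩, rfl⟩
    refine ⟨⟨U, hU, rfl⟩, hg.biUnion_ssubset_biUnion_iff.mpr hUS, fun V hV hUV => ?_⟩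
    exact hmax V hV (hg.biUnion_ssubset_biUnion_iff.mp hUV)

theorem labelsOf_image_biUnion (hg : IsBlockMap g) :
    labelsOf (fam.image (·.biUnion g)) (S.biUnion g) = (labelsOf fam S).biUnion g := by
  rw [labelsOf, labelsOf, childrenF_image_biUnion hg, hg.biUnion_sdiff, image_biUnion,
    biUnion_biUnion]
  rfl

theorem isRed_image_biUnion {fam : Finset (Finset ℕ)} {S : Finset ℕ} (hg : IsBlockMap g) :
    IsRed (fam.image (·.biUnion g)) (S.biUnion g) ↔ IsRed fam S := by
  rw [isRed_iff, isRed_iff, labelsOf_image_biUnion hg, hg.biUnion_eq_empty_iff,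
    childrenF_image_biUnion hg, forall_mem_image]
  refine and_congr_right' (forall₂_congr fun T hT => not_congr (isRed_image_biUnion (S := T) hg))
termination_by S.card
decreasing_by exact card_lt_card (ssubset_of_mem_childrenF hT)

end Forest

section Relabelling

/-- The new label `i` of `relabL x n S` comes from the old label `collapse x n i` (`mem_relabL`). -/
def collapse (x n i : ℕ) : ℕ := if i < x then i else if i < x + n then x else i + 1 - n

def relabLBlock (x n j : ℕ) : Finset ℕ :=
  if j < x then {j} else if j = x then Icc x (x + n - 1) else {j + n - 1}

variable {x y n t p i j : ℕ} {S T : Finset ℕ}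

theorem relabL_eq_biUnion (x n : ℕ) : relabL x n = fun T => T.biUnion (relabLBlock x n) := rfl

theorem relabR_eq_biUnion (x : ℕ) : relabR x = fun T => T.biUnion fun j => {x + j - 1} :=
  funext fun _ => biUnion_singleton.symm

theorem mem_relabLBlock (hn : 1 ≤ n) : i ∈ relabLBlock x n j ↔ collapse x n i = j := by
  unfold relabLBlock collapse
  split_ifs <;> simp only [mem_singleton, mem_Icc] <;> omega

theorem isBlockMap_relabLBlock (hn : 1 ≤ n) : IsBlockMap (relabLBlock x n) where
  nonempty j := ⟨if j < x then j else if j = x then x else j + n - 1, by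
    rw [mem_relabLBlock hn]; unfold collapse; split_ifs <;> omega⟩
  pairwise_disjoint a b hab := disjoint_left.mpr fun i ha hb =>
    hab (((mem_relabLBlock hn).mp ha).symm.trans ((mem_relabLBlock hn).mp hb))

theorem isBlockMap_relabR (hx : 1 ≤ x) : IsBlockMap fun j => ({x + j - 1} : Finset ℕ) :=
  isBlockMap_singleton fun a b (h : x + a - 1 = x + b - 1) => by omega

theorem mem_relabL (hn : 1 ≤ n) : i ∈ relabL x n S ↔ collapse x n i ∈ S := by
  simp [relabL_eq_biUnion, mem_relabLBlock hn]

theorem mem_relabR : i ∈ relabR x S ↔ ∃ j ∈ S, x + j - 1 = i := mem_image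

theorem relabL_injective (hn : 1 ≤ n) : Function.Injective (relabL x n) :=
  (isBlockMap_relabLBlock hn).biUnion_injective

theorem relabL_eq_empty_iff (hn : 1 ≤ n) : relabL x n S = ∅ ↔ S = ∅ :=
  (isBlockMap_relabLBlock hn).biUnion_eq_empty_iff

theorem relabR_injective (hx : 1 ≤ x) : Function.Injective (relabR x) := by
  rw [relabR_eq_biUnion]; exact (isBlockMap_relabR hx).biUnion_injective

theorem relabL_subset_relabL_iff (hn : 1 ≤ n) : relabL x n S ⊆ relabL x n T ↔ S ⊆ T :=
  (isBlockMap_relabLBlock hn).biUnion_subset_biUnion_iff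

theorem relabL_ssubset_relabL_iff (hn : 1 ≤ n) : relabL x n S ⊂ relabL x n T ↔ S ⊂ T :=
  (isBlockMap_relabLBlock hn).biUnion_ssubset_biUnion_iff

theorem relabR_subset_relabR_iff (hx : 1 ≤ x) : relabR x S ⊆ relabR x T ↔ S ⊆ T := by
  rw [relabR_eq_biUnion]; exact (isBlockMap_relabR hx).biUnion_subset_biUnion_iff

theorem relabR_ssubset_relabR_iff (hx : 1 ≤ x) : relabR x S ⊂ relabR x T ↔ S ⊂ T := by
  rw [relabR_eq_biUnion]; exact (isBlockMap_relabR hx).biUnion_ssubset_biUnion_iff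

theorem relabL_singleton (x n j : ℕ) : relabL x n {j} = relabLBlock x n j := singleton_biUnion

theorem relabL_singleton_self (x n : ℕ) : relabL x n {x} = Icc x (x + n - 1) := by
  simp [relabL_singleton, relabLBlock]

theorem relabL_singleton_of_lt (h : j < x) : relabL x n {j} = {j} := by
  simp [relabL_singleton, relabLBlock, h]

theorem relabL_singleton_of_gt (h : x < j) : relabL x n {j} = {j + n - 1} := by
  simp [relabL_singleton, relabLBlock, h.not_gt, h.ne']

theorem relabR_singleton (x j : ℕ) : relabR x {j} = {x + j - 1} := image_singleton _ _

theorem relabR_Icc (hx : 1 ≤ x) {u v : ℕ} (hu : 1 ≤ u) :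
    relabR x (Icc u v) = Icc (x + u - 1) (x + v - 1) := by
  ext i
  simp only [mem_relabR, mem_Icc]
  exact ⟨by rintro ⟨j, hj, rfl⟩; omega, fun h => ⟨i + 1 - x, by omega, by omega⟩⟩

theorem relabR_Icc_one (hx : 1 ≤ x) (n : ℕ) : relabR x (Icc 1 n) = Icc x (x + n - 1) := by
  rw [relabR_Icc hx le_rfl, Nat.add_sub_cancel]

theorem relabL_Icc_of_mem (hn : 1 ≤ n) {u v : ℕ} (hu : u ≤ x) (hv : x ≤ v) :
    relabL x n (Icc u v) = Icc u (v + n - 1) := by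
  ext i
  rw [mem_relabL hn, mem_Icc, mem_Icc]
  unfold collapse
  split_ifs <;> omega

theorem relabL_Icc_of_lt (hn : 1 ≤ n) {u v : ℕ} (h : x < u) :
    relabL x n (Icc u v) = Icc (u + n - 1) (v + n - 1) := by
  ext i
  rw [mem_relabL hn, mem_Icc, mem_Icc]
  unfold collapse
  split_ifs <;> omega

theorem relabL_eq_self (hn : 1 ≤ n) (hS : ∀ i ∈ S, i < x) : relabL x n S = S := by
  ext i
  rw [mem_relabL hn]
  unfold collapse
  split_ifs with h
  · rfl
  all_goals exact ⟨fun hi => absurd (hS _ hi) (by omega), fun hi => absurd (hS _ hi) h⟩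

theorem block_subset_relabL (h : x ∈ S) : Icc x (x + n - 1) ⊆ relabL x n S := by
  rw [← relabL_singleton_self]
  exact biUnion_subset_biUnion_of_subset_left _ (singleton_subset_iff.mpr h)

theorem disjoint_relabL_block (hn : 1 ≤ n) (h : x ∉ S) :
    Disjoint (relabL x n S) (Icc x (x + n - 1)) := by
  refine disjoint_left.mpr fun i hiS hiB => h ?_
  have hc : collapse x n i = x := by
    rw [mem_Icc] at hiB; unfold collapse; split_ifs <;> omega
  rwa [mem_relabL hn, hc] at hiS

theorem relabL_subset_block_iff (hn : 1 ≤ n) :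
    relabL x n S ⊆ Icc x (x + n - 1) ↔ S ⊆ {x} := by
  rw [← relabL_singleton_self, relabL_subset_relabL_iff hn]

theorem relabR_subset_block (hx : 1 ≤ x) (hS : S ⊆ Icc 1 n) :
    relabR x S ⊆ Icc x (x + n - 1) := by
  rw [← relabR_Icc_one hx]
  exact image_subset_image hS

theorem relabL_relabL_of_lt (hn : 1 ≤ n) (hp : 1 ≤ p) (hxy : x < y) (S : Finset ℕ) :
    relabL (y + n - 1) p (relabL x n S) = relabL x n (relabL y p S) := by
  ext i
  simp only [mem_relabL hn, mem_relabL hp]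
  congr! 1
  unfold collapse
  split_ifs <;> omega

theorem relabL_relabL_of_le (ht : 1 ≤ t) (htn : t ≤ n) (hp : 1 ≤ p) (S : Finset ℕ) :
    relabL (x + t - 1) p (relabL x n S) = relabL x (n + p - 1) S := by
  ext i
  simp only [mem_relabL (ht.trans htn), mem_relabL hp, mem_relabL (show 1 ≤ n + p - 1 by omega)]
  congr! 1
  unfold collapse
  split_ifs <;> omega

theorem relabL_relabR (hx : 1 ≤ x) (ht : 1 ≤ t) (hp : 1 ≤ p) (S : Finset ℕ) :
    relabL (x + t - 1) p (relabR x S) = relabR x (relabL t p S) := by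
  ext i
  simp only [mem_relabL hp, mem_relabR]
  constructor
  · rintro ⟨j, hj, h⟩
    refine ⟨i + 1 - x, ?_, ?_⟩
    · convert hj using 1
      unfold collapse at *; split_ifs at * <;> omega
    · unfold collapse at h; split_ifs at h <;> omega
  · rintro ⟨j, hj, rfl⟩
    refine ⟨collapse t p j, hj, ?_⟩
    unfold collapse; split_ifs <;> omega

theorem relabR_relabR (hx : 1 ≤ x) (ht : 1 ≤ t) (S : Finset ℕ) :
    relabR x (relabR t S) = relabR (x + t - 1) S := by
  rw [relabR, relabR, image_image]
  exact image_congr fun j _ => by simp only [Function.comp]; omega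

theorem relabL_relabR_of_lt (hn : 1 ≤ n) (hxy : x < y) (hS : ∀ j ∈ S, 1 ≤ j) :
    relabL x n (relabR y S) = relabR (y + n - 1) S := by
  ext i
  simp only [mem_relabL hn, mem_relabR]
  constructor
  · rintro ⟨j, hj, h⟩
    have := hS j hj
    refine ⟨j, hj, ?_⟩
    unfold collapse at h; split_ifs at h <;> omega
  · rintro ⟨j, hj, rfl⟩
    have := hS j hj
    refine ⟨j, hj, ?_⟩
    unfold collapse; split_ifs <;> omega

theorem relabL_one (x : ℕ) : relabL x 1 = id := by
  ext S i
  rw [mem_relabL le_rfl, id]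
  congr! 1
  unfold collapse
  split_ifs <;> omega

theorem relabR_one : relabR 1 = id := by
  ext S i
  simp [mem_relabR]

end Relabelling

namespace IsRWTree

variable {n : ℕ} {F : Finset (Finset ℕ)} {S : Finset ℕ}

theorem nonempty (h : IsRWTree n F) (hS : S ∈ F) : S.Nonempty := (h.1 S hS).1

theorem subset_Icc (h : IsRWTree n F) (hS : S ∈ F) : S ⊆ Icc 1 n := (h.1 S hS).2

theorem Icc_mem (h : IsRWTree n F) : Icc 1 n ∈ F := h.2.1

theorem eq_singleton_of_subset (h : IsRWTree n F) (hS : S ∈ F) {a : ℕ} (ha : S ⊆ {a}) :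
    S = {a} :=
  (subset_singleton_iff.mp ha).resolve_left (h.nonempty hS).ne_empty

theorem one_le (h : IsRWTree n F) : 1 ≤ n := by
  obtain ⟨i, hi⟩ := h.nonempty h.Icc_mem
  have := mem_Icc.mp hi
  omega

theorem eq_unitT (h : IsRWTree 1 F) : F = unitT :=
  eq_singleton_iff_unique_mem.mpr
    ⟨h.Icc_mem, fun _ hS => h.eq_singleton_of_subset hS (h.subset_Icc hS)⟩

end IsRWTree

theorem ne_singleton_of_Icc_mem {m a : ℕ} {F : Finset (Finset ℕ)} (h : Icc 1 m ∈ F)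
    (hm : 2 ≤ m) : F ≠ {{a}} := by
  rintro rfl
  have := congrArg card (mem_singleton.mp h)
  simp only [Nat.card_Icc, card_singleton] at this
  omega

/-- The block `Icc x (x + n - 1)`, the label set of the grafted tree, is a node of `A ∘ₓ B` in
cases (R1) and (R2), and in case (W) when `x` is the only label of a leaf of `A`. -/
def blockKept (n x : ℕ) (A B : Finset (Finset ℕ)) : Prop :=
  if IsRed B (Icc 1 n) then {x} ∉ A ∨ A = {{x}} else {x} ∈ A

section Composition

variable {m n x : ℕ} {A B : Finset (Finset ℕ)} {S T : Finset ℕ}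

theorem blockKept_iff (hA : A ≠ {{x}}) :
    blockKept n x A B ↔ (IsRed B (Icc 1 n) ↔ {x} ∉ A) := by
  unfold blockKept
  split_ifs with h <;> simp [h, hA]

theorem rwCompose_eq (hx : 1 ≤ x) (hn : 1 ≤ n) (hroot : Icc 1 n ∈ B) :
    rwCompose n x A B =
      (A.erase {x}).image (relabL x n) ∪ (B.erase (Icc 1 n)).image (relabR x) ∪
        if blockKept n x A B then {Icc x (x + n - 1)} else ∅ := by
  have hL : (A.erase {x}).image (relabL x n) =
      (A.image (relabL x n)).erase (Icc x (x + n - 1)) := by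
    rw [image_erase (relabL_injective hn), relabL_singleton_self]
  have hR : (B.erase (Icc 1 n)).image (relabR x) =
      (B.image (relabR x)).erase (Icc x (x + n - 1)) := by
    rw [image_erase (relabR_injective hx), relabR_Icc_one hx]
  have hRB : Icc x (x + n - 1) ∈ B.image (relabR x) :=
    relabR_Icc_one hx n ▸ mem_image_of_mem _ hroot
  have hLB : Icc x (x + n - 1) ∈ A.image (relabL x n) ↔ {x} ∈ A := by
    rw [← relabL_singleton_self, (relabL_injective hn).mem_finset_image]
  unfold rwCompose blockKept
  simp only [hL, hR, sdiff_singleton_eq_erase]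
  clear hL hR
  split_ifs <;> ext T <;> by_cases hT : T = Icc x (x + n - 1) <;> simp_all

theorem mem_rwCompose (hx : 1 ≤ x) (hn : 1 ≤ n) (hroot : Icc 1 n ∈ B) :
    T ∈ rwCompose n x A B ↔ (∃ S ∈ A, S ≠ {x} ∧ relabL x n S = T) ∨
      (∃ S ∈ B, S ≠ Icc 1 n ∧ relabR x S = T) ∨
        (T = Icc x (x + n - 1) ∧ blockKept n x A B) := by
  rw [rwCompose_eq hx hn hroot]
  split_ifs with h <;> simp [h, and_assoc, and_left_comm, or_comm, or_assoc]

theorem relabL_mem_rwCompose (hx : 1 ≤ x) (hB : IsRWTree n B) (hS : S ∈ A) (hSx : S ≠ {x}) :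
    relabL x n S ∈ rwCompose n x A B :=
  (mem_rwCompose hx hB.one_le hB.Icc_mem).mpr (Or.inl ⟨S, hS, hSx, rfl⟩)

theorem relabR_mem_rwCompose (hx : 1 ≤ x) (hB : IsRWTree n B) (hS : S ∈ B)
    (hSr : S ≠ Icc 1 n) :
    relabR x S ∈ rwCompose n x A B :=
  (mem_rwCompose hx hB.one_le hB.Icc_mem).mpr (Or.inr (Or.inl ⟨S, hS, hSr, rfl⟩))

theorem block_mem_rwCompose (hx : 1 ≤ x) (hB : IsRWTree n B) (hk : blockKept n x A B) :
    Icc x (x + n - 1) ∈ rwCompose n x A B :=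
  (mem_rwCompose hx hB.one_le hB.Icc_mem).mpr (Or.inr (Or.inr ⟨rfl, hk⟩))

theorem exists_relabL_eq_or_subset_block (hx : 1 ≤ x) (hB : IsRWTree n B)
    (hT : T ∈ rwCompose n x A B) :
    (∃ S ∈ A, S ≠ {x} ∧ relabL x n S = T) ∨ T ⊆ Icc x (x + n - 1) := by
  rcases (mem_rwCompose hx hB.one_le hB.Icc_mem).mp hT with h | ⟨S, hS, -, rfl⟩ | ⟨rfl, -⟩
  · exact Or.inl h
  · exact Or.inr (relabR_subset_block hx (hB.subset_Icc hS))
  · exact Or.inr subset_rfl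

theorem mem_rwCompose_of_subset_block (hx : 1 ≤ x) (hA : IsRWTree m A) (hB : IsRWTree n B)
    (hT : T ⊆ Icc x (x + n - 1)) :
    T ∈ rwCompose n x A B ↔
      T ∈ B.image (relabR x) ∧ (T = Icc x (x + n - 1) → blockKept n x A B) := by
  have hn := hB.one_le
  rw [mem_rwCompose hx hn hB.Icc_mem]
  constructor
  · rintro (⟨S, hS, hSx, rfl⟩ | ⟨S, hS, hSr, rfl⟩ | ⟨rfl, hk⟩)
    · exact absurd (hA.eq_singleton_of_subset hS ((relabL_subset_block_iff hn).mp hT)) hSx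
    · refine ⟨mem_image_of_mem _ hS, fun h => absurd ?_ hSr⟩
      exact relabR_injective hx (h.trans (relabR_Icc_one hx n).symm)
    · exact ⟨relabR_Icc_one hx n ▸ mem_image_of_mem _ hB.Icc_mem, fun _ => hk⟩
  · rintro ⟨hTR, hk⟩
    obtain ⟨S, hS, rfl⟩ := mem_image.mp hTR
    by_cases hSr : S = Icc 1 n
    · exact Or.inr (Or.inr ⟨hSr ▸ relabR_Icc_one hx n, hk (hSr ▸ relabR_Icc_one hx n)⟩)
    · exact Or.inr (Or.inl ⟨S, hS, hSr, rfl⟩)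

theorem Icc_mem_rwCompose (hx : 1 ≤ x) (hxm : x ≤ m) (hA : IsRWTree m A) (hB : IsRWTree n B) :
    Icc 1 (m + n - 1) ∈ rwCompose n x A B := by
  have hn := hB.one_le
  rcases (Nat.one_le_iff_ne_zero.mpr (by omega : m ≠ 0)).eq_or_lt with rfl | hm
  · obtain rfl : x = 1 := by omega
    rw [hA.eq_unitT]
    refine block_mem_rwCompose le_rfl hB ?_
    unfold blockKept unitT
    split_ifs <;> simp
  · rw [← relabL_Icc_of_mem hn hx hxm]
    refine relabL_mem_rwCompose hx hB hA.Icc_mem fun h => ?_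
    have := congrArg card h
    simp only [Nat.card_Icc, card_singleton] at this
    omega

theorem rwCompose_ne_singleton (hx : 1 ≤ x) (hxm : x ≤ m) (hA : IsRWTree m A)
    (hB : IsRWTree n B) (hmn : 2 ≤ m + n - 1) (a : ℕ) : rwCompose n x A B ≠ {{a}} :=
  ne_singleton_of_Icc_mem (Icc_mem_rwCompose hx hxm hA hB) hmn

theorem relabL_mem_rwCompose_iff (hx : 1 ≤ x) (hB : IsRWTree n B) (hS : ¬ S ⊆ {x}) :
    relabL x n S ∈ rwCompose n x A B ↔ S ∈ A := by
  refine ⟨fun h => ?_, fun h => relabL_mem_rwCompose hx hB h fun h' => hS h'.le⟩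
  rcases exists_relabL_eq_or_subset_block hx hB h with ⟨S', hS', -, hS'S⟩ | hsub
  · rwa [← relabL_injective hB.one_le hS'S]
  · exact absurd ((relabL_subset_block_iff hB.one_le).mp hsub) hS

theorem relabR_mem_rwCompose_iff (hx : 1 ≤ x) (hA : IsRWTree m A) (hB : IsRWTree n B)
    (hS : S ⊂ Icc 1 n) : relabR x S ∈ rwCompose n x A B ↔ S ∈ B := by
  have hsub : relabR x S ⊆ Icc x (x + n - 1) := relabR_subset_block hx hS.subset
  rw [mem_rwCompose_of_subset_block hx hA hB hsub, (relabR_injective hx).mem_finset_image,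
    ← relabR_Icc_one hx, (relabR_injective hx).eq_iff]
  exact and_iff_left fun h => absurd h hS.ne

theorem rwCompose_erase_relabL (hx : 1 ≤ x) (hB : IsRWTree n B) (hS : ¬ S ⊆ {x})
    (hT : relabL x n S = T) :
    (rwCompose n x A B).erase T =
      ((A.erase {x}).erase S).image (relabL x n) ∪ (B.erase (Icc 1 n)).image (relabR x) ∪
        if blockKept n x A B then {Icc x (x + n - 1)} else ∅ := by
  have hn := hB.one_le
  have hLS : ¬ relabL x n S ⊆ Icc x (x + n - 1) := fun h =>
    hS ((relabL_subset_block_iff hn).mp h)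
  rw [← hT, rwCompose_eq hx hn hB.Icc_mem, erase_union_distrib, erase_union_distrib,
    ← image_erase (relabL_injective hn)]
  congr 2
  · refine erase_eq_of_notMem fun h => hLS ?_
    obtain ⟨U, hU, hUS⟩ := mem_image.mp h
    exact hUS ▸ relabR_subset_block hx (hB.subset_Icc (mem_of_mem_erase hU))
  · split_ifs
    · exact erase_eq_of_notMem fun h => hLS (mem_singleton.mp h).le
    · rfl

theorem rwCompose_erase_relabR (hx : 1 ≤ x) (hA : IsRWTree m A) (hB : IsRWTree n B)
    (hS : S ⊂ Icc 1 n) (hT : relabR x S = T) :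
    (rwCompose n x A B).erase T =
      (A.erase {x}).image (relabL x n) ∪ ((B.erase (Icc 1 n)).erase S).image (relabR x) ∪
        if blockKept n x A B then {Icc x (x + n - 1)} else ∅ := by
  have hn := hB.one_le
  have hsub : relabR x S ⊆ Icc x (x + n - 1) := relabR_subset_block hx hS.subset
  rw [← hT, rwCompose_eq hx hn hB.Icc_mem, erase_union_distrib, erase_union_distrib,
    ← image_erase (relabR_injective hx)]
  congr 2
  · refine erase_eq_of_notMem fun h => ?_
    obtain ⟨U, hU, hUS⟩ := mem_image.mp h
    obtain ⟨hUx, hUA⟩ := mem_erase.mp hU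
    exact hUx (hA.eq_singleton_of_subset hUA ((relabL_subset_block_iff hn).mp (hUS ▸ hsub)))
  · split_ifs
    · refine erase_eq_of_notMem fun h => hS.ne (relabR_injective hx ?_)
      rw [mem_singleton.mp h, relabR_Icc_one hx]
    · rfl

theorem rwCompose_unitT_left {G : Finset (Finset ℕ)} (hG : IsRWTree n G) :
    rwCompose n 1 unitT G = G := by
  have hk : blockKept n 1 unitT G := by unfold blockKept unitT; split_ifs <;> simp
  rw [rwCompose_eq le_rfl hG.one_le hG.Icc_mem, if_pos hk, relabR_one, image_id,
    Nat.add_sub_cancel_left]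
  simp [unitT, insert_erase hG.Icc_mem]

theorem rwCompose_unitT_right (hx : 1 ≤ x) (F : Finset (Finset ℕ)) :
    rwCompose 1 x F unitT = F := by
  have hk : blockKept 1 x F unitT ↔ {x} ∈ F := by
    rw [blockKept, if_neg (by simpa using not_isRed_singleton (fam := unitT) 1)]
  rw [rwCompose_eq hx le_rfl (by simp [unitT]), relabL_one, image_id, Nat.add_sub_cancel,
    Icc_self]
  split_ifs with h
  · simp [unitT, insert_erase (hk.mp h)]
  · simp [unitT, erase_eq_of_notMem (mt hk.mpr h)]

end Composition

section Redness

variable {m n x i : ℕ} {A B : Finset (Finset ℕ)} {S T U c : Finset ℕ}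

theorem nonempty_of_mem_rwCompose (hx : 1 ≤ x) (hA : IsRWTree m A) (hB : IsRWTree n B)
    (hT : T ∈ rwCompose n x A B) : T.Nonempty := by
  rcases (mem_rwCompose hx hB.one_le hB.Icc_mem).mp hT with
    ⟨S, hS, -, rfl⟩ | ⟨S, hS, -, rfl⟩ | ⟨rfl, -⟩
  · exact (hA.nonempty hS).biUnion fun j _ => (isBlockMap_relabLBlock hB.one_le).nonempty j
  · exact (hB.nonempty hS).image _
  · exact nonempty_Icc.mpr (by have := hB.one_le; omega)

theorem isRed_rwCompose_relabR (hx : 1 ≤ x) (hA : IsRWTree m A) (hB : IsRWTree n B)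
    (hS : S ∈ B) (hk : S = Icc 1 n → blockKept n x A B) :
    IsRed (rwCompose n x A B) (relabR x S) ↔ IsRed B S := by
  have hSB : relabR x S ⊆ Icc x (x + n - 1) := relabR_subset_block hx (hB.subset_Icc hS)
  refine (isRed_congr (fam' := B.image (relabR x)) fun T hT => ?_).trans ?_
  · rw [mem_rwCompose_of_subset_block hx hA hB (hT.trans hSB)]
    refine and_iff_left fun hTB => hk ?_
    rw [hTB, ← relabR_Icc_one hx, relabR_subset_relabR_iff hx] at hT
    exact (hB.subset_Icc hS).antisymm hT
  · rw [relabR_eq_biUnion]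
    exact isRed_image_biUnion (isBlockMap_relabR hx)

theorem isRed_rwCompose_relabL_of_notMem (hx : 1 ≤ x) (hA : IsRWTree m A) (hB : IsRWTree n B)
    (hxS : x ∉ S) :
    IsRed (rwCompose n x A B) (relabL x n S) ↔ IsRed A S := by
  have hn := hB.one_le
  refine (isRed_congr (fam' := A.image (relabL x n)) fun T hT =>
    ⟨fun hTF => ?_, fun hTA => ?_⟩).trans (isRed_image_biUnion (isBlockMap_relabLBlock hn))
  · rcases exists_relabL_eq_or_subset_block hx hB hTF with ⟨S', hS', -, rfl⟩ | hTB
    · exact mem_image_of_mem _ hS'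
    · obtain ⟨i, hi⟩ := nonempty_of_mem_rwCompose hx hA hB hTF
      exact absurd (hTB hi) (disjoint_left.mp (disjoint_relabL_block hn hxS) (hT hi))
  · obtain ⟨S', hS', rfl⟩ := mem_image.mp hTA
    refine relabL_mem_rwCompose hx hB hS' fun h => hxS ?_
    exact (relabL_subset_relabL_iff hn).mp hT (h ▸ mem_singleton_self x)

theorem block_ssubset_relabL (hn : 1 ≤ n) (hxS : x ∈ S) (hSx : S ≠ {x}) :
    Icc x (x + n - 1) ⊂ relabL x n S := by
  rw [← relabL_singleton_self, relabL_ssubset_relabL_iff hn]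
  exact ssubset_of_subset_of_ne (singleton_subset_iff.mpr hxS) (Ne.symm hSx)

theorem exists_mem_rwCompose_of_mem_block (hx : 1 ≤ x) (hB : IsRWTree n B) (hS : S ∈ A)
    (hc : c ∈ childrenF A S) (hxc : x ∈ c) (hi : i ∈ Icc x (x + n - 1)) :
    ∃ U ∈ rwCompose n x A B, U ⊂ relabL x n S ∧ i ∈ U := by
  have hn := hB.one_le
  obtain ⟨hcA, hcS, -⟩ := mem_childrenF.mp hc
  by_cases hcx : c = {x}
  swap
  · exact ⟨_, relabL_mem_rwCompose hx hB hcA hcx, (relabL_ssubset_relabL_iff hn).mpr hcS,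
      block_subset_relabL hxc hi⟩
  subst hcx
  have hBkS := block_ssubset_relabL hn (hcS.subset hxc) hcS.ne'
  by_cases hk : blockKept n x A B
  · exact ⟨_, block_mem_rwCompose hx hB hk, hBkS, hi⟩
  -- The block is dropped although `{x} ∈ A`: the root of `B` is red, so it carries no label.
  have hred : IsRed B (Icc 1 n) := by
    rw [blockKept_iff fun h => hcS.ne' (mem_singleton.mp (h ▸ hS))] at hk
    tauto
  have hj : i + 1 - x ∈ Icc 1 n := by rw [mem_Icc] at hi ⊢; omega
  have hjl : i + 1 - x ∉ labelsOf B (Icc 1 n) := by simp [(isRed_iff.mp hred).1]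
  rw [mem_labelsOf] at hjl
  push Not at hjl
  obtain ⟨U, hU, hUr, hjU⟩ := hjl hj
  refine ⟨_, relabR_mem_rwCompose hx hB hU hUr.ne,
    (relabR_subset_block hx hUr.subset).trans_ssubset hBkS, mem_relabR.mpr ⟨_, hjU, ?_⟩⟩
  rw [mem_Icc] at hi
  omega

theorem labelsOf_rwCompose_relabL (hx : 1 ≤ x) (hB : IsRWTree n B) (hS : S ∈ A)
    (hc : c ∈ childrenF A S) (hxc : x ∈ c) :
    labelsOf (rwCompose n x A B) (relabL x n S) = relabL x n (labelsOf A S) := by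
  have hn := hB.one_le
  ext i
  rw [mem_labelsOf, mem_relabL hn, mem_relabL hn, mem_labelsOf]
  refine and_congr_right fun _ => ⟨fun h T hT hTS hiT => ?_, fun h U hU hUS hiU => ?_⟩
  · by_cases hTx : T = {x}
    · have hiB : i ∈ Icc x (x + n - 1) := by
        rwa [← relabL_singleton_self, mem_relabL hn, ← hTx]
      obtain ⟨U, hU, hUS, hiU⟩ := exists_mem_rwCompose_of_mem_block hx hB hS hc hxc hiB
      exact h U hU hUS hiU
    · exact h _ (relabL_mem_rwCompose hx hB hT hTx) ((relabL_ssubset_relabL_iff hn).mpr hTS)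
        ((mem_relabL hn).mpr hiT)
  · rcases exists_relabL_eq_or_subset_block hx hB hU with ⟨S', hS', -, rfl⟩ | hUB
    · exact h S' hS' ((relabL_ssubset_relabL_iff hn).mp hUS) ((mem_relabL hn).mp hiU)
    · have hix : collapse x n i = x := by
        rw [← mem_singleton, ← mem_relabL hn, relabL_singleton_self]
        exact hUB hiU
      exact h c (mem_of_mem_childrenF hc) (ssubset_of_mem_childrenF hc) (by rwa [hix])

theorem relabL_mem_childrenF_rwCompose (hx : 1 ≤ x) (hA : IsRWTree m A) (hB : IsRWTree n B)
    (hc : c ∈ childrenF A S) (hcx : c ≠ {x}) :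
    relabL x n c ∈ childrenF (rwCompose n x A B) (relabL x n S) := by
  have hn := hB.one_le
  obtain ⟨hcA, hcS, hmax⟩ := mem_childrenF.mp hc
  refine mem_childrenF.mpr ⟨relabL_mem_rwCompose hx hB hcA hcx,
    (relabL_ssubset_relabL_iff hn).mpr hcS, fun U hU h1 h2 => ?_⟩
  rcases exists_relabL_eq_or_subset_block hx hB hU with ⟨S', hS', -, rfl⟩ | hUB
  · exact hmax S' hS' ((relabL_ssubset_relabL_iff hn).mp h1) ((relabL_ssubset_relabL_iff hn).mp h2)
  · exact hcx (hA.eq_singleton_of_subset hcA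
      ((relabL_subset_block_iff hn).mp (h1.subset.trans hUB)))

theorem relabR_ssubset_block (hx : 1 ≤ x) (hB : IsRWTree n B) (hS : S ∈ B)
    (hSr : S ≠ Icc 1 n) :
    relabR x S ⊂ Icc x (x + n - 1) := by
  rw [← relabR_Icc_one hx, relabR_ssubset_relabR_iff hx]
  exact ssubset_of_subset_of_ne (hB.subset_Icc hS) hSr

theorem not_isRed_of_mem_childrenF_of_subset_block (hx : 1 ≤ x) (hA : IsRWTree m A)
    (hB : IsRWTree n B) (hS : S ∈ A) (hc : c ∈ childrenF A S) (hxc : x ∈ c)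
    (hT : T ∈ childrenF (rwCompose n x A B) (relabL x n S)) (hTB : T ⊆ Icc x (x + n - 1)) :
    ¬ IsRed (rwCompose n x A B) T := by
  have hn := hB.one_le
  obtain ⟨hTF, -, hmax⟩ := mem_childrenF.mp hT
  obtain ⟨hTR, hk⟩ := (mem_rwCompose_of_subset_block hx hA hB hTB).mp hTF
  obtain ⟨S₂, hS₂, rfl⟩ := mem_image.mp hTR
  obtain ⟨hcA, hcS, -⟩ := mem_childrenF.mp hc
  -- Either `T` is the block, kept because the root of `B` is white; or the image of `c`, or the
  -- kept block, lies strictly between `T` and the image of `S`; or the root of `B` is red and `T`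
  -- is the image of one of its (hence white) children.
  by_cases hcx : c = {x}
  swap
  · have hTc : relabR x S₂ ⊂ relabL x n c := ssubset_of_subset_of_ne
      (hTB.trans (block_subset_relabL hxc)) fun h =>
        hcx (hA.eq_singleton_of_subset hcA ((relabL_subset_block_iff hn).mp (h ▸ hTB)))
    exact fun _ => hmax _ (relabL_mem_rwCompose hx hB hcA hcx) hTc
      ((relabL_ssubset_relabL_iff hn).mpr hcS)
  subst hcx
  have hBkS := block_ssubset_relabL hn (hcS.subset hxc) hcS.ne'
  have hkred : blockKept n x A B ↔ ¬ IsRed B (Icc 1 n) := by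
    rw [blockKept_iff fun h => hcS.ne' (mem_singleton.mp (h ▸ hS))]
    tauto
  by_cases hS₂r : S₂ = Icc 1 n
  · subst hS₂r
    rw [isRed_rwCompose_relabR hx hA hB hS₂ fun _ => hk (relabR_Icc_one hx n)]
    exact hkred.mp (hk (relabR_Icc_one hx n))
  rw [isRed_rwCompose_relabR hx hA hB hS₂ fun h => absurd h hS₂r]
  by_cases hred : IsRed B (Icc 1 n)
  · refine fun h₂ => not_isRed_of_isRed_child (mem_childrenF.mpr ⟨hS₂,
      ssubset_of_subset_of_ne (hB.subset_Icc hS₂) hS₂r, fun U hU h1 h2 => ?_⟩) h₂ hred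
    exact hmax _ (relabR_mem_rwCompose hx hB hU h2.ne) ((relabR_ssubset_relabR_iff hx).mpr h1)
      ((relabR_subset_block hx h2.subset).trans_ssubset hBkS)
  · exact fun _ => hmax _ (block_mem_rwCompose hx hB (hkred.mpr hred))
      (relabR_ssubset_block hx hB hS₂ hS₂r) hBkS

theorem exists_relabL_eq_of_isRed_child (hx : 1 ≤ x) (hA : IsRWTree m A) (hB : IsRWTree n B)
    (hS : S ∈ A) (hc : c ∈ childrenF A S) (hxc : x ∈ c)
    (hT : T ∈ childrenF (rwCompose n x A B) (relabL x n S)) (hred : IsRed (rwCompose n x A B) T) :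
    ∃ S' ∈ childrenF A S, S' ≠ {x} ∧ relabL x n S' = T := by
  have hn := hB.one_le
  rcases exists_relabL_eq_or_subset_block hx hB (mem_of_mem_childrenF hT) with
    ⟨S', hS', hS'x, rfl⟩ | hTB
  · obtain ⟨-, hTS, hmax⟩ := mem_childrenF.mp hT
    refine ⟨S', mem_childrenF.mpr ⟨hS', (relabL_ssubset_relabL_iff hn).mp hTS,
      fun U hU h1 h2 => ?_⟩, hS'x, rfl⟩
    have hUx : U ≠ {x} := fun h => hS'x (hA.eq_singleton_of_subset hS' (h ▸ h1.subset))
    exact hmax _ (relabL_mem_rwCompose hx hB hU hUx) ((relabL_ssubset_relabL_iff hn).mpr h1)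
      ((relabL_ssubset_relabL_iff hn).mpr h2)
  · exact absurd hred (not_isRed_of_mem_childrenF_of_subset_block hx hA hB hS hc hxc hT hTB)

theorem subset_block_or_disjoint (hx : 1 ≤ x) (hB : IsRWTree n B) (hxl : x ∈ labelsOf A S)
    (hU : U ∈ rwCompose n x A B) (hUS : U ⊂ relabL x n S) :
    U ⊆ Icc x (x + n - 1) ∨ Disjoint U (Icc x (x + n - 1)) := by
  rcases exists_relabL_eq_or_subset_block hx hB hU with ⟨S', hS', -, rfl⟩ | hUB
  · refine Or.inr (disjoint_relabL_block hB.one_le fun hxS' => ?_)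
    exact (mem_labelsOf.mp hxl).2 S' hS' ((relabL_ssubset_relabL_iff hB.one_le).mp hUS) hxS'
  · exact Or.inl hUB

theorem mem_childrenF_rwCompose_of_subset_block (hx : 1 ≤ x) (hA : IsRWTree m A)
    (hB : IsRWTree n B) (hSx : S ≠ {x}) (hxl : x ∈ labelsOf A S) (hT : T ∈ rwCompose n x A B)
    (hTB : T ⊆ Icc x (x + n - 1))
    (hmax : ∀ U ∈ rwCompose n x A B, T ⊂ U → ¬ U ⊆ Icc x (x + n - 1)) :
    T ∈ childrenF (rwCompose n x A B) (relabL x n S) := by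
  have hBkS := block_ssubset_relabL hB.one_le (mem_labelsOf.mp hxl).1 hSx
  refine mem_childrenF.mpr ⟨hT, hTB.trans_ssubset hBkS, fun U hU h1 h2 => ?_⟩
  rcases subset_block_or_disjoint hx hB hxl hU h2 with hUB | hdisj
  · exact hmax U hU h1 hUB
  · obtain ⟨i, hi⟩ := nonempty_of_mem_rwCompose hx hA hB hT
    exact disjoint_left.mp hdisj (h1.subset hi) (hTB hi)

theorem exists_relabR_eq_of_subset_block (hx : 1 ≤ x) (hA : IsRWTree m A) (hB : IsRWTree n B)
    (hk : ¬ blockKept n x A B) (hU : U ∈ rwCompose n x A B) (hUB : U ⊆ Icc x (x + n - 1)) :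
    ∃ S' ∈ B, S' ⊂ Icc 1 n ∧ relabR x S' = U := by
  obtain ⟨hUR, hk'⟩ := (mem_rwCompose_of_subset_block hx hA hB hUB).mp hU
  obtain ⟨S', hS', rfl⟩ := mem_image.mp hUR
  refine ⟨S', hS', ssubset_of_subset_of_ne (hB.subset_Icc hS') fun h => hk (hk' ?_), rfl⟩
  rw [h, relabR_Icc_one hx]

theorem not_isRed_rwCompose_relabL_of_mem_labelsOf (hx : 1 ≤ x) (hA : IsRWTree m A)
    (hB : IsRWTree n B) (hS : S ∈ A) (hSx : S ≠ {x}) (hxl : x ∈ labelsOf A S) :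
    ¬ IsRed (rwCompose n x A B) (relabL x n S) := by
  have hxS := (mem_labelsOf.mp hxl).1
  have hxA : {x} ∉ A := fun h => (mem_labelsOf.mp hxl).2 {x} h
    (ssubset_of_subset_of_ne (singleton_subset_iff.mpr hxS) (Ne.symm hSx)) (mem_singleton_self x)
  have hkred : blockKept n x A B ↔ IsRed B (Icc 1 n) := by
    rw [blockKept_iff fun h => hSx (mem_singleton.mp (h ▸ hS))]
    simp [hxA]
  by_cases hred : IsRed B (Icc 1 n)
  · have hk := hkred.mpr hred
    refine not_isRed_of_isRed_child (mem_childrenF_rwCompose_of_subset_block hx hA hB hSx hxl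
      (block_mem_rwCompose hx hB hk) subset_rfl fun U _ h1 h2 => h1.not_subset h2) ?_
    rwa [← relabR_Icc_one hx, isRed_rwCompose_relabR hx hA hB hB.Icc_mem fun _ => hk]
  have hk : ¬ blockKept n x A B := mt hkred.mp hred
  rw [isRed_iff] at hred
  push Not at hred
  by_cases hl : labelsOf B (Icc 1 n) = ∅
  · obtain ⟨c₂, hc₂, hc₂red⟩ := hred hl
    obtain ⟨hc₂B, hc₂r, hmax⟩ := mem_childrenF.mp hc₂
    refine not_isRed_of_isRed_child (mem_childrenF_rwCompose_of_subset_block hx hA hB hSx hxl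
      (relabR_mem_rwCompose hx hB hc₂B hc₂r.ne) (relabR_subset_block hx hc₂r.subset)
      fun U hU h1 h2 => ?_) ?_
    · obtain ⟨S', hS', hS'r, rfl⟩ := exists_relabR_eq_of_subset_block hx hA hB hk hU h2
      exact hmax S' hS' ((relabR_ssubset_relabR_iff hx).mp h1) hS'r
    · rwa [isRed_rwCompose_relabR hx hA hB hc₂B fun h => absurd h hc₂r.ne]
  obtain ⟨j, hj⟩ := nonempty_iff_ne_empty.mpr hl
  obtain ⟨hjr, hjmax⟩ := mem_labelsOf.mp hj
  have hjB : x + j - 1 ∈ Icc x (x + n - 1) := by rw [mem_Icc] at hjr ⊢; omega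
  refine not_isRed_of_mem_labelsOf (mem_labelsOf.mpr ⟨block_subset_relabL hxS hjB,
    fun U hU hUS hjU => ?_⟩)
  rcases subset_block_or_disjoint hx hB hxl hU hUS with hUB | hdisj
  · obtain ⟨S', hS', hS'r, rfl⟩ := exists_relabR_eq_of_subset_block hx hA hB hk hU hUB
    obtain ⟨j', hj', hj'j⟩ := mem_relabR.mp hjU
    have := mem_Icc.mp (hB.subset_Icc hS' hj')
    obtain rfl : j' = j := by omega
    exact hjmax S' hS' hS'r hj'
  · exact disjoint_left.mp hdisj hjU hjB

theorem isRed_rwCompose_relabL (hx : 1 ≤ x) (hA : IsRWTree m A) (hB : IsRWTree n B)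
    {S : Finset ℕ} (hS : S ∈ A) (hSx : S ≠ {x}) :
    IsRed (rwCompose n x A B) (relabL x n S) ↔ IsRed A S := by
  by_cases hxS : x ∈ S
  swap
  · exact isRed_rwCompose_relabL_of_notMem hx hA hB hxS
  by_cases hxl : x ∈ labelsOf A S
  · exact iff_of_false (not_isRed_rwCompose_relabL_of_mem_labelsOf hx hA hB hS hSx hxl)
      (not_isRed_of_mem_labelsOf hxl)
  obtain ⟨c, hc, hxc⟩ : ∃ c ∈ childrenF A S, x ∈ c := by
    rw [mem_labelsOf] at hxl
    push Not at hxl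
    obtain ⟨T, hT, hTS, hxT⟩ := hxl hxS
    obtain ⟨c, hc, hTc⟩ := exists_mem_childrenF_superset hT hTS
    exact ⟨c, hc, hTc hxT⟩
  rw [isRed_iff, isRed_iff, labelsOf_rwCompose_relabL hx hB hS hc hxc,
    relabL_eq_empty_iff hB.one_le]
  refine and_congr_right' ⟨fun h c' hc' hred => ?_, fun h T hT hred => ?_⟩
  · have hc'x : c' ≠ {x} := by rintro rfl; exact not_isRed_singleton x hred
    exact h _ (relabL_mem_childrenF_rwCompose hx hA hB hc' hc'x)
      ((isRed_rwCompose_relabL hx hA hB (mem_of_mem_childrenF hc') hc'x).mpr hred)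
  · obtain ⟨c', hc', hc'x, rfl⟩ := exists_relabL_eq_of_isRed_child hx hA hB hS hc hxc hT hred
    exact h c' hc' ((isRed_rwCompose_relabL hx hA hB (mem_of_mem_childrenF hc') hc'x).mp hred)
termination_by S.card
decreasing_by all_goals exact card_lt_card (ssubset_of_mem_childrenF hc')

end Redness

section Axioms

variable {m n p x y t : ℕ} {A B C : Finset (Finset ℕ)}

theorem blockKept_congr_left {A' : Finset (Finset ℕ)} {x' : ℕ} (hA : A ≠ {{x}})
    (hA' : A' ≠ {{x'}}) (hmem : {x} ∈ A ↔ {x'} ∈ A') :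
    blockKept n x A B ↔ blockKept n x' A' B := by
  rw [blockKept_iff hA, blockKept_iff hA', hmem]

theorem blockKept_congr_right {B' : Finset (Finset ℕ)} {n' : ℕ}
    (hred : IsRed B (Icc 1 n) ↔ IsRed B' (Icc 1 n')) :
    blockKept n x A B ↔ blockKept n' x A B' := by
  simp only [blockKept, hred]

theorem blockKept_rwCompose_relabL {y' : ℕ} (hx : 1 ≤ x) (hxm : x ≤ m) (hm : 2 ≤ m)
    (hA : IsRWTree m A) (hB : IsRWTree n B) (hyx : y ≠ x) (hy' : relabL x n {y} = {y'}) :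
    blockKept p y' (rwCompose n x A B) C ↔ blockKept p y A C := by
  refine blockKept_congr_left (rwCompose_ne_singleton hx hxm hA hB (by have := hB.one_le; omega) _)
    (ne_singleton_of_Icc_mem hA.Icc_mem hm) ?_
  rw [← hy', relabL_mem_rwCompose_iff hx hB (by simpa using hyx)]

theorem rwCompose_rwCompose_right_eq (hA : IsRWTree m A) (hB : IsRWTree n B) (hC : IsRWTree p C)
    (hx : 1 ≤ x) (hxy : x < y) (hym : y ≤ m) :
    rwCompose p (y + n - 1) (rwCompose n x A B) C =
      ((A.erase {x}).erase {y}).image (relabL x n ∘ relabL y p) ∪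
        (B.erase (Icc 1 n)).image (relabR x) ∪ (C.erase (Icc 1 p)).image (relabR (y + n - 1)) ∪
        (if blockKept n x A B then {Icc x (x + n - 1)} else ∅) ∪
        (if blockKept p y A C then {Icc (y + n - 1) (y + n - 1 + p - 1)} else ∅) := by
  have hn := hB.one_le
  have hp := hC.one_le
  have hAA : relabL (y + n - 1) p ∘ relabL x n = relabL x n ∘ relabL y p :=
    funext (relabL_relabL_of_lt hn hp hxy)
  have hBB : Set.EqOn (relabL (y + n - 1) p ∘ relabR x) (relabR x) ↑(B.erase (Icc 1 n)) :=
    fun S hS => relabL_eq_self hp fun i hi => by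
      have := mem_Icc.mp (relabR_subset_block hx (hB.subset_Icc (mem_of_mem_erase hS)) hi)
      omega
  have hblock : relabL (y + n - 1) p (Icc x (x + n - 1)) = Icc x (x + n - 1) :=
    relabL_eq_self hp fun i hi => by have := mem_Icc.mp hi; omega
  rw [rwCompose_eq (by omega) hp hC.Icc_mem,
    blockKept_rwCompose_relabL hx (by omega) (by omega) hA hB hxy.ne' (relabL_singleton_of_gt hxy),
    rwCompose_erase_relabL hx hB (by simp [hxy.ne']) (relabL_singleton_of_gt hxy)]
  simp only [image_union, image_image, apply_ite (image _), image_singleton, image_empty,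
    hblock, hAA, image_congr hBB]
  ac_rfl

theorem rwCompose_rwCompose_left_eq (hA : IsRWTree m A) (hB : IsRWTree n B) (hC : IsRWTree p C)
    (hx : 1 ≤ x) (hxy : x < y) (hym : y ≤ m) :
    rwCompose n x (rwCompose p y A C) B =
      ((A.erase {x}).erase {y}).image (relabL x n ∘ relabL y p) ∪
        (B.erase (Icc 1 n)).image (relabR x) ∪ (C.erase (Icc 1 p)).image (relabR (y + n - 1)) ∪
        (if blockKept n x A B then {Icc x (x + n - 1)} else ∅) ∪
        (if blockKept p y A C then {Icc (y + n - 1) (y + n - 1 + p - 1)} else ∅) := by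
  have hn := hB.one_le
  have hCC : Set.EqOn (relabL x n ∘ relabR y) (relabR (y + n - 1)) ↑(C.erase (Icc 1 p)) :=
    fun S hS => relabL_relabR_of_lt hn hxy fun j hj =>
      (mem_Icc.mp (hC.subset_Icc (mem_of_mem_erase hS) hj)).1
  have hblock : relabL x n (Icc y (y + p - 1)) = Icc (y + n - 1) (y + n - 1 + p - 1) := by
    rw [relabL_Icc_of_lt hn hxy]; congr 1; omega
  rw [rwCompose_eq hx hn hB.Icc_mem,
    blockKept_rwCompose_relabL (by omega) hym (by omega) hA hC hxy.ne (relabL_singleton_of_lt hxy),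
    rwCompose_erase_relabL (by omega) hC (by simp [hxy.ne]) (relabL_singleton_of_lt hxy),
    erase_right_comm]
  simp only [image_union, image_image, apply_ite (image _), image_singleton, image_empty,
    hblock, image_congr hCC]
  ac_rfl

theorem rwCompose_rwCompose_comm (hA : IsRWTree m A) (hB : IsRWTree n B) (hC : IsRWTree p C)
    (hx : 1 ≤ x) (hxy : x < y) (hym : y ≤ m) :
    rwCompose p (y + n - 1) (rwCompose n x A B) C = rwCompose n x (rwCompose p y A C) B :=
  (rwCompose_rwCompose_right_eq hA hB hC hx hxy hym).trans
    (rwCompose_rwCompose_left_eq hA hB hC hx hxy hym).symm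

theorem blockKept_rwCompose_relabR (hx : 1 ≤ x) (hxm : x ≤ m) (hA : IsRWTree m A)
    (hB : IsRWTree n B) (hts : {t} ⊂ Icc 1 n) :
    blockKept p (x + t - 1) (rwCompose n x A B) C ↔ blockKept p t B C := by
  have hn : 2 ≤ n := by
    have := card_lt_card hts
    simp only [card_singleton, Nat.card_Icc] at this
    omega
  refine blockKept_congr_left (rwCompose_ne_singleton hx hxm hA hB (by omega) _)
    (ne_singleton_of_Icc_mem hB.Icc_mem hn) ?_
  rw [← relabR_singleton, relabR_mem_rwCompose_iff hx hA hB hts]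

theorem rwCompose_rwCompose_block_eq (hA : IsRWTree m A) (hB : IsRWTree n B) (hC : IsRWTree p C)
    (hx : 1 ≤ x) (hxm : x ≤ m) (ht : 1 ≤ t) (hts : {t} ⊂ Icc 1 n) :
    rwCompose p (x + t - 1) (rwCompose n x A B) C =
      (A.erase {x}).image (relabL x (n + p - 1)) ∪
        ((B.erase (Icc 1 n)).erase {t}).image (relabR x ∘ relabL t p) ∪
        (C.erase (Icc 1 p)).image (relabR (x + t - 1)) ∪
        (if blockKept n x A B then {Icc x (x + (n + p - 1) - 1)} else ∅) ∪
        (if blockKept p t B C then {Icc (x + t - 1) (x + t - 1 + p - 1)} else ∅) := by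
  have hp := hC.one_le
  have htn : t ≤ n := (mem_Icc.mp (hts.subset (mem_singleton_self t))).2
  have hLL : relabL (x + t - 1) p ∘ relabL x n = relabL x (n + p - 1) :=
    funext (relabL_relabL_of_le ht htn hp)
  have hLR : relabL (x + t - 1) p ∘ relabR x = relabR x ∘ relabL t p :=
    funext (relabL_relabR hx ht hp)
  have hblock : relabL (x + t - 1) p (Icc x (x + n - 1)) = Icc x (x + (n + p - 1) - 1) := by
    rw [relabL_Icc_of_mem hp (by omega) (by omega)]; congr 1; omega
  rw [rwCompose_eq (by omega) hp hC.Icc_mem, blockKept_rwCompose_relabR hx hxm hA hB hts,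
    rwCompose_erase_relabR hx hA hB hts (relabR_singleton x t)]
  simp only [image_union, image_image, apply_ite (image _), image_singleton, image_empty,
    hLL, hLR, hblock]
  ac_rfl

theorem rwCompose_rwCompose_inner_eq (hB : IsRWTree n B) (hC : IsRWTree p C)
    (hx : 1 ≤ x) (ht : 1 ≤ t) (hts : {t} ⊂ Icc 1 n) :
    rwCompose (n + p - 1) x A (rwCompose p t B C) =
      (A.erase {x}).image (relabL x (n + p - 1)) ∪
        ((B.erase (Icc 1 n)).erase {t}).image (relabR x ∘ relabL t p) ∪
        (C.erase (Icc 1 p)).image (relabR (x + t - 1)) ∪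
        (if blockKept n x A B then {Icc x (x + (n + p - 1) - 1)} else ∅) ∪
        (if blockKept p t B C then {Icc (x + t - 1) (x + t - 1 + p - 1)} else ∅) := by
  have hp := hC.one_le
  have htn : t ≤ n := (mem_Icc.mp (hts.subset (mem_singleton_self t))).2
  have hroot : relabL t p (Icc 1 n) = Icc 1 (n + p - 1) := relabL_Icc_of_mem hp ht htn
  have hk : blockKept (n + p - 1) x A (rwCompose p t B C) ↔ blockKept n x A B := by
    refine blockKept_congr_right ?_
    rw [← hroot, isRed_rwCompose_relabL ht hB hC hB.Icc_mem hts.ne']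
  have hRR : relabR x ∘ relabR t = relabR (x + t - 1) := funext (relabR_relabR hx ht)
  have hblock : relabR x (Icc t (t + p - 1)) = Icc (x + t - 1) (x + t - 1 + p - 1) := by
    rw [relabR_Icc hx ht]; congr 1; omega
  rw [rwCompose_eq hx (by omega) (hroot ▸ Icc_mem_rwCompose ht htn hB hC), hk,
    rwCompose_erase_relabL ht hC (fun h => hts.not_subset h) hroot, erase_right_comm]
  simp only [image_union, image_image, apply_ite (image _), image_singleton, image_empty,
    hRR, hblock]
  ac_rfl

theorem rwCompose_assoc (hA : IsRWTree m A) (hB : IsRWTree n B) (hC : IsRWTree p C)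
    (hx : 1 ≤ x) (hxm : x ≤ m) (ht : 1 ≤ t) (htn : t ≤ n) :
    rwCompose p (x + t - 1) (rwCompose n x A B) C =
      rwCompose (n + p - 1) x A (rwCompose p t B C) := by
  by_cases hn : n = 1
  · subst hn
    obtain rfl : t = 1 := by omega
    rw [hB.eq_unitT, rwCompose_unitT_right hx, rwCompose_unitT_left hC, Nat.add_sub_cancel,
      Nat.add_sub_cancel_left]
  have hts : {t} ⊂ Icc 1 n := by
    refine ssubset_of_subset_of_ne (by simp [ht, htn]) fun h => hn ?_
    have := congrArg card h
    simp only [card_singleton, Nat.card_Icc] at this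
    omega
  exact (rwCompose_rwCompose_block_eq hA hB hC hx hxm ht hts).trans
    (rwCompose_rwCompose_inner_eq hB hC hx ht hts).symm

end Axioms

/-- The labelled red and white trees with the compositions `∘ₓ` form a
set-operad: the parallel and nested axioms hold (with the indices of the second
compositions shifted according to the relabelling conventions), and the single node
labelled `{1}` is a two-sided unit. -/
theorem rw_trees_operad :
    (∀ (m n p x y : ℕ) (A B C : Finset (Finset ℕ)),
        IsRWTree m A → IsRWTree n B → IsRWTree p C →
        1 ≤ x → x ≤ m → 1 ≤ y → y ≤ m → x ≠ y →
        rwCompose p (if x < y then y + n - 1 else y) (rwCompose n x A B) C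
          = rwCompose n (if y < x then x + p - 1 else x) (rwCompose p y A C) B) ∧
    (∀ (m n p x t : ℕ) (A B C : Finset (Finset ℕ)),
        IsRWTree m A → IsRWTree n B → IsRWTree p C →
        1 ≤ x → x ≤ m → 1 ≤ t → t ≤ n →
        rwCompose p (x + t - 1) (rwCompose n x A B) C
          = rwCompose (n + p - 1) x A (rwCompose p t B C)) ∧
    (∀ (n : ℕ) (G : Finset (Finset ℕ)), IsRWTree n G → rwCompose n 1 unitT G = G) ∧
    (∀ (m x : ℕ) (F : Finset (Finset ℕ)), IsRWTree m F → 1 ≤ x → x ≤ m →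
        rwCompose 1 x F unitT = F) := by
  refine ⟨fun m n p x y A B C hA hB hC hx hxm hy hym hxy => ?_,
    fun m n p x t A B C hA hB hC hx hxm ht htn => rwCompose_assoc hA hB hC hx hxm ht htn,
    fun n G hG => rwCompose_unitT_left hG, fun m x F _ hx _ => rwCompose_unitT_right hx F⟩
  rcases lt_or_gt_of_ne hxy with h | h
  · rw [if_pos h, if_neg h.not_gt]
    exact rwCompose_rwCompose_comm hA hB hC hx h hym
  · rw [if_neg h.not_gt, if_pos h]
    exact (rwCompose_rwCompose_comm hA hC hB hy h hxm).symm
end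

section
/- Let a_n := |BWTS(n)| be the number of recursively labelled red and white trees on {1,…,n}. Then a₁ = 1 and for all n ≥ 2, a_n = 2·a_{n−1} + 2·∑_{k=1}^{n−1} a_k · a_{n−k}; equivalently the ordinary generating series F = ∑_{n≥1} a_n x^n ∈ ℚ[[x]] satisfies F = x + 2xF + 2F². In particular a₂ = 4, a₃ = 24, a₄ = 176. -/
open scoped Classical

/-- `aCount n = |BWTS(n)|`, the number of recursively labelled red and white trees on
`{1,…,n}`. -/
noncomputable def aCount (n : ℕ) : ℕ :=
  Set.ncard {fam : Finset (Finset ℕ) | IsRWTree n fam ∧ IsRecursive fam}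

/-!
In this encoding `aCount n` counts the laminar families of nonempty intervals of `[1,n]` that
contain `[1,n]`. Adding or removing the root shows that there are twice as many such families on
a nonempty interval when the root is not required. For `n ≥ 2`, cut a rooted family at the
largest `k < n` with `[1,k]` in it: every other non-root member lies in `[1,k]` or in `[k+1,n]`,
so the family is a rooted family on `[1,k]` together with an arbitrary one on `[k+1,n]` (or, if
there is no such `k`, an arbitrary family on `[2,n]`). The counts depend only on the length of
the interval, which gives `a_n = 2a_{n-1} + ∑ₖ a_k · 2a_{n-k}`; the generating-series identity is
this recursion read off coefficientwise.
-/

open Finset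

def IsIntervalIn (lo hi : ℕ) (S : Finset ℕ) : Prop :=
  S.Nonempty ∧ S ⊆ Icc lo hi ∧ ∃ a b, S = Icc a b

def IsLaminar (fam : Finset (Finset ℕ)) : Prop :=
  ∀ S ∈ fam, ∀ T ∈ fam, S ⊆ T ∨ T ⊆ S ∨ Disjoint S T

noncomputable def intervalFamilies (lo hi : ℕ) : Finset (Finset (Finset ℕ)) :=
  (Icc lo hi).powerset.powerset.filter fun fam =>
    (∀ S ∈ fam, IsIntervalIn lo hi S) ∧ IsLaminar fam

noncomputable def rootedIntervalFamilies (lo hi : ℕ) : Finset (Finset (Finset ℕ)) :=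
  (intervalFamilies lo hi).filter (Icc lo hi ∈ ·)

section Intervals

variable {lo hi lo' hi' : ℕ} {S : Finset ℕ}

lemma isIntervalIn_Icc (h : lo ≤ hi) : IsIntervalIn lo hi (Icc lo hi) :=
  ⟨nonempty_Icc.2 h, Subset.rfl, lo, hi, rfl⟩

lemma IsIntervalIn.of_subset (hS : IsIntervalIn lo hi S) (h : S ⊆ Icc lo' hi') :
    IsIntervalIn lo' hi' S :=
  ⟨hS.1, h, hS.2.2⟩

lemma IsIntervalIn.eq_Icc_of_mem (hS : IsIntervalIn lo hi S) (hlo : lo ∈ S) :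
    ∃ b ∈ Icc lo hi, S = Icc lo b := by
  obtain ⟨hne, hsub, a, b, rfl⟩ := hS
  have hab : a ≤ b := nonempty_Icc.1 hne
  obtain ⟨hla, hbh⟩ := (Icc_subset_Icc_iff hab).1 hsub
  obtain rfl : a = lo := le_antisymm (mem_Icc.1 hlo).1 hla
  exact ⟨b, mem_Icc.2 ⟨hab, hbh⟩, rfl⟩

end Intervals

section Laminar

variable {fam L R : Finset (Finset ℕ)}

lemma IsLaminar.mono (h : IsLaminar fam) (hsub : L ⊆ fam) : IsLaminar L :=
  fun S hS T hT => h S (hsub hS) T (hsub hT)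

lemma IsLaminar.insert {U : Finset ℕ} (h : IsLaminar fam) (hU : ∀ S ∈ fam, S ⊆ U) :
    IsLaminar (insert U fam) := by
  intro S hS T hT
  rw [mem_insert] at hS hT
  rcases hS with rfl | hS <;> rcases hT with rfl | hT
  exacts [.inl Subset.rfl, .inr (.inl (hU T hT)), .inl (hU S hS), h S hS T hT]

lemma IsLaminar.union (hL : IsLaminar L) (hR : IsLaminar R)
    (hLR : ∀ S ∈ L, ∀ T ∈ R, Disjoint S T) : IsLaminar (L ∪ R) := by
  intro S hS T hT
  rw [mem_union] at hS hT
  rcases hS with hS | hS <;> rcases hT with hT | hT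
  exacts [hL S hS T hT, .inr (.inr (hLR S hS T hT)), .inr (.inr (hLR T hT S hS).symm),
    hR S hS T hT]

end Laminar

section Families

variable {lo hi k : ℕ} {fam : Finset (Finset ℕ)}

lemma mem_intervalFamilies :
    fam ∈ intervalFamilies lo hi ↔ (∀ S ∈ fam, IsIntervalIn lo hi S) ∧ IsLaminar fam := by
  simp only [intervalFamilies, mem_filter, mem_powerset, and_iff_right_iff_imp]
  exact fun h S hS => mem_powerset.2 (h.1 S hS).2.1

lemma mem_rootedIntervalFamilies :
    fam ∈ rootedIntervalFamilies lo hi ↔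
      (∀ S ∈ fam, IsIntervalIn lo hi S) ∧ IsLaminar fam ∧ Icc lo hi ∈ fam := by
  rw [rootedIntervalFamilies, mem_filter, mem_intervalFamilies, and_assoc]

lemma aCount_eq_card_rootedIntervalFamilies (n : ℕ) :
    aCount n = #(rootedIntervalFamilies 1 n) := by
  rw [aCount, ← Set.ncard_coe_finset]
  congr 1
  ext fam
  simp only [Set.mem_ofPred_eq, mem_coe, mem_rootedIntervalFamilies, IsRWTree,
    IsRecursive, IsIntervalIn, IsLaminar]
  grind

lemma rootedIntervalFamilies_eq_empty (h : hi < lo) : rootedIntervalFamilies lo hi = ∅ :=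
  eq_empty_of_forall_notMem fun fam hfam => by
    obtain ⟨hint, -, hroot⟩ := mem_rootedIntervalFamilies.1 hfam
    exact (nonempty_Icc.1 (hint _ hroot).1).not_gt h

lemma card_rootedIntervalFamilies_self (lo : ℕ) : #(rootedIntervalFamilies lo lo) = 1 := by
  rw [card_eq_one]
  refine ⟨{Icc lo lo}, eq_singleton_iff_unique_mem.2 ⟨?_, fun fam hfam => ?_⟩⟩
  · rw [mem_rootedIntervalFamilies]
    refine ⟨by simpa using isIntervalIn_Icc le_rfl, ?_, mem_singleton_self _⟩
    simp [IsLaminar]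
  · obtain ⟨hint, -, hroot⟩ := mem_rootedIntervalFamilies.1 hfam
    refine eq_singleton_iff_unique_mem.2 ⟨hroot, fun S hS => ?_⟩
    obtain ⟨hne, hsub, -⟩ := hint S hS
    rw [Icc_self] at hsub ⊢
    exact (subset_singleton_iff.1 hsub).resolve_left hne.ne_empty

lemma card_intervalFamilies (h : lo ≤ hi) :
    #(intervalFamilies lo hi) = 2 * #(rootedIntervalFamilies lo hi) := by
  have hcompl : #((intervalFamilies lo hi).filter (Icc lo hi ∉ ·)) =
      #(rootedIntervalFamilies lo hi) := by
    refine card_nbij' (insert (Icc lo hi)) (erase · (Icc lo hi)) ?_ ?_ ?_ ?_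
    · intro fam hfam
      obtain ⟨hint, hlam⟩ := mem_intervalFamilies.1 (mem_of_mem_filter _ hfam)
      refine mem_rootedIntervalFamilies.2 ⟨fun S hS => ?_,
        hlam.insert fun S hS => (hint S hS).2.1, mem_insert_self _ _⟩
      rcases mem_insert.1 hS with rfl | hS
      exacts [isIntervalIn_Icc h, hint S hS]
    · intro fam hfam
      obtain ⟨hint, hlam, -⟩ := mem_rootedIntervalFamilies.1 hfam
      refine mem_filter.2 ⟨mem_intervalFamilies.2 ⟨fun S hS => hint S (mem_of_mem_erase hS),
        hlam.mono (erase_subset _ _)⟩, notMem_erase _ _⟩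
    · exact fun fam hfam => erase_insert (mem_filter.1 hfam).2
    · exact fun fam hfam => insert_erase (mem_rootedIntervalFamilies.1 hfam).2.2
  rw [← card_filter_add_card_filter_not (Icc lo hi ∈ ·), hcompl, two_mul]
  rfl

noncomputable def cutPoint (lo hi : ℕ) (fam : Finset (Finset ℕ)) : WithBot ℕ :=
  ((Ico lo hi).filter fun j => Icc lo j ∈ fam).max

lemma cutPoint_eq_bot_iff : cutPoint lo hi fam = ⊥ ↔ ∀ j ∈ Ico lo hi, Icc lo j ∉ fam := by
  rw [cutPoint, Finset.max_eq_bot, filter_eq_empty_iff]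

lemma cutPoint_eq_coe_iff : cutPoint lo hi fam = k ↔
    k ∈ Ico lo hi ∧ Icc lo k ∈ fam ∧ ∀ j ∈ Ico lo hi, Icc lo j ∈ fam → j ≤ k := by
  constructor
  · intro h
    have hk := mem_filter.1 (mem_of_max h)
    exact ⟨hk.1, hk.2, fun j hj hjf => le_max_of_eq (mem_filter.2 ⟨hj, hjf⟩) h⟩
  · rintro ⟨hk, hkf, hmax⟩
    refine le_antisymm (Finset.max_le fun j hj => ?_) (le_max (mem_filter.2 ⟨hk, hkf⟩))
    exact WithBot.coe_le_coe.2 (hmax j (mem_filter.1 hj).1 (mem_filter.1 hj).2)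

lemma cutPoint_mem (lo hi : ℕ) (fam : Finset (Finset ℕ)) :
    cutPoint lo hi fam ∈ insert ⊥ ((Ico lo hi).image WithBot.some) := by
  cases h : cutPoint lo hi fam with
  | bot => exact mem_insert_self _ _
  | coe k => exact mem_insert_of_mem (mem_image_of_mem _ (cutPoint_eq_coe_iff.1 h).1)

lemma exists_mem_Ico_eq_Icc (hfam : fam ∈ intervalFamilies lo hi) {S : Finset ℕ} (hS : S ∈ fam)
    (hne : S ≠ Icc lo hi) (hlo : lo ∈ S) : ∃ j ∈ Ico lo hi, S = Icc lo j := by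
  obtain ⟨j, hj, rfl⟩ := ((mem_intervalFamilies.1 hfam).1 S hS).eq_Icc_of_mem hlo
  rw [mem_Icc] at hj
  exact ⟨j, mem_Ico.2 ⟨hj.1, hj.2.lt_of_ne fun h => hne (h ▸ rfl)⟩, rfl⟩

lemma subset_Icc_succ_of_cutPoint_eq_bot (hfam : fam ∈ intervalFamilies lo hi)
    (hcut : cutPoint lo hi fam = ⊥) {S : Finset ℕ} (hS : S ∈ fam) (hne : S ≠ Icc lo hi) :
    S ⊆ Icc (lo + 1) hi := by
  have hlo : lo ∉ S := fun hlo => by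
    obtain ⟨j, hj, rfl⟩ := exists_mem_Ico_eq_Icc hfam hS hne hlo
    exact cutPoint_eq_bot_iff.1 hcut j hj hS
  intro x hx
  have := mem_Icc.1 (((mem_intervalFamilies.1 hfam).1 S hS).2.1 hx)
  exact mem_Icc.2 ⟨Nat.succ_le_of_lt (this.1.lt_of_ne fun h => hlo (h ▸ hx)), this.2⟩

lemma subset_or_subset_of_cutPoint_eq_coe (hfam : fam ∈ intervalFamilies lo hi)
    (hcut : cutPoint lo hi fam = k) {S : Finset ℕ} (hS : S ∈ fam) (hne : S ≠ Icc lo hi) :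
    S ⊆ Icc lo k ∨ S ⊆ Icc (k + 1) hi := by
  obtain ⟨-, hkf, hmax⟩ := cutPoint_eq_coe_iff.1 hcut
  obtain ⟨hint, hlam⟩ := mem_intervalFamilies.1 hfam
  by_cases hlo : lo ∈ S
  · obtain ⟨j, hj, rfl⟩ := exists_mem_Ico_eq_Icc hfam hS hne hlo
    exact .inl (Icc_subset_Icc_right (hmax j hj hS))
  rcases hlam S hS _ hkf with h | h | h
  · exact .inl h
  · exact absurd (h (left_mem_Icc.2 (mem_Ico.1 (cutPoint_eq_coe_iff.1 hcut).1).1)) hlo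
  · right
    intro x hx
    have hx' := mem_Icc.1 ((hint S hS).2.1 hx)
    have : x ∉ Icc lo k := disjoint_left.1 h hx
    simp only [mem_Icc, not_and, not_le] at this
    exact mem_Icc.2 ⟨this hx'.1, hx'.2⟩

lemma filter_subset_Icc_mem_intervalFamilies (hfam : fam ∈ intervalFamilies lo hi) (lo' hi' : ℕ) :
    fam.filter (· ⊆ Icc lo' hi') ∈ intervalFamilies lo' hi' := by
  obtain ⟨hint, hlam⟩ := mem_intervalFamilies.1 hfam
  refine mem_intervalFamilies.2 ⟨fun S hS => ?_, hlam.mono (filter_subset _ _)⟩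
  obtain ⟨hS, hsub⟩ := mem_filter.1 hS
  exact (hint S hS).of_subset hsub

lemma mem_of_Icc_mem_insert {F : Finset (Finset ℕ)} {j : ℕ} (hj : j ∈ Ico lo hi)
    (h : Icc lo j ∈ insert (Icc lo hi) F) : Icc lo j ∈ F := by
  obtain ⟨hlo, hhi⟩ := mem_Ico.1 hj
  refine (mem_insert.1 h).resolve_left fun he => hhi.not_ge ?_
  exact ((Icc_subset_Icc_iff (hlo.trans hhi.le)).1 he.ge).2

lemma card_filter_cutPoint_eq_bot (h : lo ≤ hi) :
    #((rootedIntervalFamilies lo hi).filter (cutPoint lo hi · = ⊥)) =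
      #(intervalFamilies (lo + 1) hi) := by
  refine card_nbij' (erase · (Icc lo hi)) (insert (Icc lo hi)) ?_ ?_ ?_ ?_
  · intro fam hfam
    obtain ⟨hQ, hcut⟩ := mem_filter.1 hfam
    obtain ⟨hint, hlam, -⟩ := mem_rootedIntervalFamilies.1 hQ
    refine mem_intervalFamilies.2 ⟨fun S hS => ?_, hlam.mono (erase_subset _ _)⟩
    obtain ⟨hne, hS⟩ := mem_erase.1 hS
    exact (hint S hS).of_subset
      (subset_Icc_succ_of_cutPoint_eq_bot (mem_of_mem_filter _ hQ) hcut hS hne)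
  · intro R hR
    obtain ⟨hint, hlam⟩ := mem_intervalFamilies.1 hR
    have hsub : Icc (lo + 1) hi ⊆ Icc lo hi := Icc_subset_Icc (Nat.le_succ lo) le_rfl
    have hlo : ∀ S ∈ R, lo ∉ S := fun S hS hlo => by simpa using (hint S hS).2.1 hlo
    refine mem_filter.2 ⟨mem_rootedIntervalFamilies.2 ⟨fun S hS => ?_,
      hlam.insert fun S hS => (hint S hS).2.1.trans hsub, mem_insert_self _ _⟩, ?_⟩
    · rcases mem_insert.1 hS with rfl | hS
      exacts [isIntervalIn_Icc h, (hint S hS).of_subset ((hint S hS).2.1.trans hsub)]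
    · refine cutPoint_eq_bot_iff.2 fun j hj hjR => ?_
      exact hlo _ (mem_of_Icc_mem_insert hj hjR) (left_mem_Icc.2 (mem_Ico.1 hj).1)
  · exact fun fam hfam => insert_erase (mem_rootedIntervalFamilies.1 (mem_filter.1 hfam).1).2.2
  · refine fun R hR => erase_insert fun hroot => ?_
    simpa using ((mem_intervalFamilies.1 hR).1 _ hroot).2.1 (left_mem_Icc.2 h)

lemma disjoint_Icc_Icc_succ (lo k hi : ℕ) : Disjoint (Icc lo k) (Icc (k + 1) hi) :=
  disjoint_left.2 fun x hx hx' => by simp only [mem_Icc] at hx hx'; omega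

lemma insert_union_mem_rootedIntervalFamilies {L R : Finset (Finset ℕ)} (hk : k ∈ Ico lo hi)
    (hL : L ∈ rootedIntervalFamilies lo k) (hR : R ∈ intervalFamilies (k + 1) hi) :
    insert (Icc lo hi) (L ∪ R) ∈ rootedIntervalFamilies lo hi ∧
      cutPoint lo hi (insert (Icc lo hi) (L ∪ R)) = k := by
  obtain ⟨hklo, hkhi⟩ := mem_Ico.1 hk
  obtain ⟨hLint, hLlam, hLroot⟩ := mem_rootedIntervalFamilies.1 hL
  obtain ⟨hRint, hRlam⟩ := mem_intervalFamilies.1 hR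
  have hLsub : ∀ S ∈ L, S ⊆ Icc lo hi := fun S hS =>
    (hLint S hS).2.1.trans (Icc_subset_Icc le_rfl hkhi.le)
  have hRsub : ∀ S ∈ R, S ⊆ Icc lo hi := fun S hS =>
    (hRint S hS).2.1.trans (Icc_subset_Icc (by omega) le_rfl)
  refine ⟨mem_rootedIntervalFamilies.2 ⟨fun S hS => ?_, ?_, mem_insert_self _ _⟩,
    cutPoint_eq_coe_iff.2 ⟨hk, mem_insert_of_mem (mem_union_left _ hLroot), fun j hj hjF => ?_⟩⟩
  · rcases mem_insert.1 hS with rfl | hS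
    · exact isIntervalIn_Icc (hklo.trans hkhi.le)
    rcases mem_union.1 hS with hS | hS
    exacts [(hLint S hS).of_subset (hLsub S hS), (hRint S hS).of_subset (hRsub S hS)]
  · refine (hLlam.union hRlam fun S hS T hT => ?_).insert fun S hS => ?_
    · exact (disjoint_Icc_Icc_succ lo k hi).mono (hLint S hS).2.1 (hRint T hT).2.1
    · exact (mem_union.1 hS).elim (hLsub S) (hRsub S)
  · have hlj := (mem_Ico.1 hj).1
    rcases mem_union.1 (mem_of_Icc_mem_insert hj hjF) with h | h
    · exact ((Icc_subset_Icc_iff hlj).1 (hLint _ h).2.1).2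
    · exact absurd ((Icc_subset_Icc_iff hlj).1 (hRint _ h).2.1).1 (by omega)

lemma card_filter_cutPoint_eq_coe (hk : k ∈ Ico lo hi) :
    #((rootedIntervalFamilies lo hi).filter (cutPoint lo hi · = k)) =
      #(rootedIntervalFamilies lo k) * #(intervalFamilies (k + 1) hi) := by
  obtain ⟨hklo, hkhi⟩ := mem_Ico.1 hk
  rw [← card_product]
  refine card_nbij' (fun fam => (fam.filter (· ⊆ Icc lo k), fam.filter (· ⊆ Icc (k + 1) hi)))
    (fun p => insert (Icc lo hi) (p.1 ∪ p.2)) ?_ ?_ ?_ ?_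
  · intro fam hfam
    obtain ⟨hQ, hcut⟩ := mem_filter.1 hfam
    have hP := mem_of_mem_filter _ hQ
    refine mem_product.2 ⟨mem_filter.2 ⟨filter_subset_Icc_mem_intervalFamilies hP lo k, ?_⟩,
      filter_subset_Icc_mem_intervalFamilies hP (k + 1) hi⟩
    exact mem_filter.2 ⟨(cutPoint_eq_coe_iff.1 hcut).2.1, Subset.rfl⟩
  · rintro ⟨L, R⟩ hLR
    obtain ⟨hL, hR⟩ := mem_product.1 hLR
    exact mem_filter.2 (insert_union_mem_rootedIntervalFamilies hk hL hR)
  · intro fam hfam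
    obtain ⟨hQ, hcut⟩ := mem_filter.1 hfam
    ext S
    simp only [mem_insert, mem_union, mem_filter]
    constructor
    · rintro (rfl | ⟨hS, -⟩ | ⟨hS, -⟩)
      exacts [(mem_rootedIntervalFamilies.1 hQ).2.2, hS, hS]
    · intro hS
      by_cases hroot : S = Icc lo hi
      · exact .inl hroot
      · exact .inr ((subset_or_subset_of_cutPoint_eq_coe (mem_of_mem_filter _ hQ) hcut hS
          hroot).imp (⟨hS, ·⟩) (⟨hS, ·⟩))
  · rintro ⟨L, R⟩ hLR
    obtain ⟨hL, hR⟩ := mem_product.1 hLR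
    have hLint := (mem_rootedIntervalFamilies.1 hL).1
    have hRint := (mem_intervalFamilies.1 hR).1
    have hdisj := disjoint_Icc_Icc_succ lo k hi
    have hroot₁ : ¬ Icc lo hi ⊆ Icc lo k := fun h =>
      hkhi.not_ge ((Icc_subset_Icc_iff (hklo.trans hkhi.le)).1 h).2
    have hroot₂ : ¬ Icc lo hi ⊆ Icc (k + 1) hi := fun h =>
      (Nat.lt_succ_of_le hklo).not_ge ((Icc_subset_Icc_iff (hklo.trans hkhi.le)).1 h).1
    have hRL : ∀ T ∈ R, ¬ T ⊆ Icc lo k := fun T hT h =>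
      (hRint T hT).1.ne_empty ((disjoint_self_iff_empty _).1 (hdisj.mono h (hRint T hT).2.1))
    have hLR : ∀ S ∈ L, ¬ S ⊆ Icc (k + 1) hi := fun S hS h =>
      (hLint S hS).1.ne_empty ((disjoint_self_iff_empty _).1 (hdisj.mono (hLint S hS).2.1 h))
    simp only [filter_insert, if_neg hroot₁, if_neg hroot₂, filter_union,
      filter_true_of_mem fun S hS => (hLint S hS).2.1, filter_false_of_mem hRL,
      filter_true_of_mem fun T hT => (hRint T hT).2.1, filter_false_of_mem hLR, union_empty,
      empty_union]

lemma card_rootedIntervalFamilies_eq_add_sum (h : lo < hi) :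
    #(rootedIntervalFamilies lo hi) = #(intervalFamilies (lo + 1) hi) +
      ∑ k ∈ Ico lo hi, #(rootedIntervalFamilies lo k) * #(intervalFamilies (k + 1) hi) := by
  rw [card_eq_sum_card_fiberwise fun fam _ => cutPoint_mem lo hi fam,
    sum_insert (by simp), sum_image fun _ _ _ _ h => WithBot.coe_injective h,
    card_filter_cutPoint_eq_bot h.le]
  exact congrArg _ (sum_congr rfl fun k hk => card_filter_cutPoint_eq_coe hk)

lemma card_rootedIntervalFamilies_rec (h : lo < hi) :
    #(rootedIntervalFamilies lo hi) = 2 * #(rootedIntervalFamilies (lo + 1) hi) +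
      ∑ k ∈ Ico lo hi,
        #(rootedIntervalFamilies lo k) * (2 * #(rootedIntervalFamilies (k + 1) hi)) := by
  rw [card_rootedIntervalFamilies_eq_add_sum h, card_intervalFamilies h]
  exact congrArg _ (sum_congr rfl fun k hk => by rw [card_intervalFamilies (mem_Ico.1 hk).2])

lemma card_rootedIntervalFamilies_add (d : ℕ) (h : lo ≤ hi) :
    #(rootedIntervalFamilies (lo + d) (hi + d)) = #(rootedIntervalFamilies lo hi) := by
  induction hlen : hi - lo using Nat.strong_induction_on generalizing lo hi with
  | _ m ih =>
  obtain rfl | hlt := h.eq_or_lt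
  · rw [card_rootedIntervalFamilies_self, card_rootedIntervalFamilies_self]
  rw [card_rootedIntervalFamilies_rec hlt, card_rootedIntervalFamilies_rec (by omega),
    ← sum_Ico_add', Nat.add_right_comm, ih (hi - (lo + 1)) (by omega) (by omega) rfl]
  refine congrArg _ (sum_congr rfl fun k hk => ?_)
  obtain ⟨hlk, hkh⟩ := mem_Ico.1 hk
  rw [Nat.add_right_comm, ih (k - lo) (by omega) hlk rfl, ih (hi - (k + 1)) (by omega) hkh rfl]

end Families

lemma sum_antidiagonal_mul_eq_sum_Ico {R : Type*} [Semiring R] {f : ℕ → R} (h0 : f 0 = 0)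
    (n : ℕ) : ∑ p ∈ antidiagonal n, f p.1 * f p.2 = ∑ k ∈ Ico 1 n, f k * f (n - k) := by
  rw [Nat.sum_antidiagonal_eq_sum_range_succ_mk]
  refine (sum_subset (fun k hk => ?_) fun k hk hk' => ?_).symm
  · simp only [mem_Ico, mem_range] at hk ⊢
    omega
  · obtain rfl | rfl : k = 0 ∨ k = n := by
      simp only [mem_Ico, mem_range] at hk hk'
      omega
    all_goals simp [h0]

open PowerSeries in
lemma PowerSeries.mk_eq_X_add_two_mul_X_mul_add_two_mul_sq {R : Type*} [CommSemiring R]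
    {a : ℕ → R} (h0 : a 0 = 0) (h1 : a 1 = 1)
    (hrec : ∀ n, 2 ≤ n → a n = 2 * a (n - 1) + 2 * ∑ k ∈ Ico 1 n, a k * a (n - k)) :
    mk a = X + 2 * X * mk a + 2 * mk a ^ 2 := by
  ext n
  rw [mul_assoc, two_mul, two_mul, sq]
  simp only [map_add, coeff_mul (φ := mk a), coeff_mk, sum_antidiagonal_mul_eq_sum_Ico h0]
  rcases n with _ | _ | n
  · simp [h0]
  · simp [h0, h1]
  · rw [coeff_succ_X_mul, coeff_mk, coeff_X, if_neg (by omega), hrec _ le_add_self,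
      Nat.add_succ_sub_one]
    ring

lemma aCount_zero : aCount 0 = 0 := by
  rw [aCount_eq_card_rootedIntervalFamilies, rootedIntervalFamilies_eq_empty one_pos, card_empty]

lemma aCount_one : aCount 1 = 1 := by
  rw [aCount_eq_card_rootedIntervalFamilies, card_rootedIntervalFamilies_self]

lemma aCount_rec {n : ℕ} (hn : 2 ≤ n) :
    aCount n = 2 * aCount (n - 1) + 2 * ∑ k ∈ Ico 1 n, aCount k * aCount (n - k) := by
  have hshift : ∀ k ∈ Ico 1 n, #(rootedIntervalFamilies (k + 1) n) = aCount (n - k) := by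
    intro k hk
    obtain ⟨h1k, hkn⟩ := mem_Ico.1 hk
    rw [aCount_eq_card_rootedIntervalFamilies,
      ← card_rootedIntervalFamilies_add k (lo := 1) (hi := n - k) (by omega),
      Nat.sub_add_cancel hkn.le, Nat.add_comm 1]
  rw [aCount_eq_card_rootedIntervalFamilies, card_rootedIntervalFamilies_rec (by omega),
    hshift 1 (by simp; omega), mul_sum]
  refine congrArg _ (sum_congr rfl fun k hk => ?_)
  rw [hshift k hk, aCount_eq_card_rootedIntervalFamilies k]
  ring

/-- `a₁ = 1` and `a_n = 2a_{n-1} + 2∑_{k=1}^{n-1} a_k a_{n-k}` for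
`n ≥ 2`; equivalently the ordinary generating series `F = ∑ a_n xⁿ` satisfies
`F = x + 2xF + 2F²`.  In particular `a₂ = 4`, `a₃ = 24`, `a₄ = 176`. -/
theorem bwts_generating_series :
    aCount 1 = 1 ∧ aCount 2 = 4 ∧ aCount 3 = 24 ∧ aCount 4 = 176 ∧
    (∀ n : ℕ, 2 ≤ n →
      aCount n = 2 * aCount (n - 1)
        + 2 * ∑ k ∈ Finset.Ico 1 n, aCount k * aCount (n - k)) ∧
    (PowerSeries.mk fun n => (aCount n : ℚ))
      = PowerSeries.X + 2 * PowerSeries.X * (PowerSeries.mk fun n => (aCount n : ℚ))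
        + 2 * (PowerSeries.mk fun n => (aCount n : ℚ)) ^ 2 := by
  refine ⟨aCount_one, ?_, ?_, ?_, fun n => aCount_rec, ?_⟩
  iterate 3 simp [aCount_rec, sum_Ico_succ_top, aCount_one]
  refine PowerSeries.mk_eq_X_add_two_mul_X_mul_add_two_mul_sq (by simp [aCount_zero])
    (by simp [aCount_one]) fun n hn => ?_
  exact_mod_cast aCount_rec hn
end

section
/- For each n ≥ 1, the map Φ : BWTSL(n) → FF(n) is injective: two distinct labelled red and white trees on {1,…,n} have distinct associated formal fractions. -/
open scoped Classical

/-- The map `Φ` from labelled red and white trees to formal fractions: each white node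
`z` contributes `[S(z)]⁻¹`, each non-root red node contributes `[S(z)]`, and a red root
contributes `1`. -/
noncomputable def PhiT (n : ℕ) (fam : Finset (Finset ℕ)) : FFrac :=
  ∑ S ∈ fam, Finsupp.single S
    (if IsRed fam S then (if S = Finset.Icc 1 n then 0 else 1) else (-1 : ℤ))

/-- `Φ` is injective on the labelled red and white trees on
`{1,…,n}`. -/
theorem phiT_injective (n : ℕ) :
    Set.InjOn (PhiT n) {fam : Finset (Finset ℕ) | IsRWTree n fam} := by
  have key : ∀ fam : Finset (Finset ℕ), ∀ S : Finset ℕ,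
      PhiT n fam S = if S ∈ fam then
        (if IsRed fam S then (if S = Finset.Icc 1 n then 0 else 1) else (-1 : ℤ)) else 0 := by
    intro fam S
    unfold PhiT
    rw [Finsupp.finset_sum_apply]
    simp [Finsupp.single_apply]
  have mem_of : ∀ f₁ f₂ : Finset (Finset ℕ), IsRWTree n f₁ → IsRWTree n f₂ →
      PhiT n f₁ = PhiT n f₂ → ∀ S, S ∈ f₁ → S ∈ f₂ := by
    intro f₁ f₂ h₁ h₂ heq S hS
    by_cases hroot : S = Finset.Icc 1 n
    · exact hroot ▸ h₂.2.1
    · by_contra hS2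
      have e1 := key f₁ S
      have e2 := key f₂ S
      rw [heq] at e1
      rw [e2, if_neg hS2] at e1
      rw [if_pos hS] at e1
      split_ifs at e1 <;> omega
  intro f₁ h₁ f₂ h₂ heq
  apply Finset.Subset.antisymm
  · exact fun S hS => mem_of f₁ f₂ h₁ h₂ heq S hS
  · exact fun S hS => mem_of f₂ f₁ h₂ h₁ heq.symm S hS
end
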